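/- arXiv:math/0407482 — 5 statements merged into one kernel-verified Lean document; each statement's English description precedes it below -/
import Mathlib

section
/- Let 2 ≤ q < ∞ and let T : X → Y be a bounded linear operator between Banach spaces. If T has strong martingale cotype q with constant c, then T is uniformly q-convex with the same constant c; i.e., ‖(Tx₊ − Tx₋)/2‖ ≤ c ((‖x₊‖^q + ‖x₋‖^q)/2 − ‖(x₊+x₋)/2‖^q)^{1/q} for all x₊, x₋ ∈ X. -/
open MeasureTheory Finset

/-- The `L_q` norm of a function on `[0,1)`: `(∫₀¹ ‖f t‖^q dt)^(1/q)`. -/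
noncomputable def LqNorm {X : Type*} [NormedAddCommGroup X] (q : ℝ) (f : ℝ → X) : ℝ :=
  (∫ t in (0:ℝ)..1, ‖f t‖ ^ q) ^ (1/q)

/-- `f : [0,1) → X` is measurable with respect to the dyadic σ-algebra `F_k`,
i.e. constant on each dyadic interval `[i/2^k, (i+1)/2^k)`. -/
def DyadicMeas {X : Type*} (k : ℕ) (f : ℝ → X) : Prop :=
  ∀ s t : ℝ, s ∈ Set.Ico (0:ℝ) 1 → t ∈ Set.Ico (0:ℝ) 1 →
    ⌊s * 2 ^ k⌋ = ⌊t * 2 ^ k⌋ → f s = f t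

/-- `d` is a dyadic martingale difference at level `k`: it is `F_k`-measurable and
its value on the left half of each level-`(k-1)` dyadic interval is the negative of
its value on the right half (i.e. `E(d | F_{k-1}) = 0`). -/
def IsDyadicDiff {X : Type*} [NormedAddCommGroup X] (k : ℕ) (d : ℝ → X) : Prop :=
  DyadicMeas k d ∧
    ∀ j : ℕ, 2 * j + 1 < 2 ^ k →
      d ((2 * j : ℝ) / 2 ^ k) = - d ((2 * j + 1 : ℝ) / 2 ^ k)

/-- `T` has strong martingale type `p` with constant `c`. -/
def StrongMartType {X Y : Type*} [NormedAddCommGroup X] [NormedSpace ℝ X]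
    [NormedAddCommGroup Y] [NormedSpace ℝ Y] (T : X →L[ℝ] Y) (p c : ℝ) : Prop :=
  ∀ (n : ℕ) (d : ℕ → ℝ → X), (∀ k, 1 ≤ k → k ≤ n → IsDyadicDiff k (d k)) →
    ∀ y : Y,
      LqNorm p (fun t => y + ∑ k ∈ Finset.Icc 1 n, T (d k t)) ≤
        (‖y‖ ^ p + c ^ p * ∑ k ∈ Finset.Icc 1 n, LqNorm p (d k) ^ p) ^ (1/p)

/-- `T` has strong martingale cotype `q` with constant `c`. -/
def StrongMartCotype {X Y : Type*} [NormedAddCommGroup X] [NormedSpace ℝ X]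
    [NormedAddCommGroup Y] [NormedSpace ℝ Y] (T : X →L[ℝ] Y) (q c : ℝ) : Prop :=
  ∀ (n : ℕ) (x : X) (d : ℕ → ℝ → X), d 0 = (fun _ => x) →
    (∀ k, 1 ≤ k → k ≤ n → IsDyadicDiff k (d k)) →
      (‖x‖ ^ q + c⁻¹ ^ q *
          ∑ k ∈ Finset.Icc 1 n, LqNorm q (fun t => T (d k t)) ^ q) ^ (1/q) ≤
        LqNorm q (fun t => ∑ k ∈ Finset.range (n+1), d k t)

/-- `T` has (ordinary) martingale type `p` with constant `c`. -/
def MartType {X Y : Type*} [NormedAddCommGroup X] [NormedSpace ℝ X]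
    [NormedAddCommGroup Y] [NormedSpace ℝ Y] (T : X →L[ℝ] Y) (p c : ℝ) : Prop :=
  ∀ (n : ℕ) (d : ℕ → ℝ → X), DyadicMeas 0 (d 0) →
    (∀ k, 1 ≤ k → k ≤ n → IsDyadicDiff k (d k)) →
      LqNorm p (fun t => ∑ k ∈ Finset.range (n+1), T (d k t)) ≤
        c * (∑ k ∈ Finset.range (n+1), LqNorm p (d k) ^ p) ^ (1/p)

/-- `T` has (ordinary) martingale cotype `q` with constant `c`. -/
def MartCotype {X Y : Type*} [NormedAddCommGroup X] [NormedSpace ℝ X]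
    [NormedAddCommGroup Y] [NormedSpace ℝ Y] (T : X →L[ℝ] Y) (q c : ℝ) : Prop :=
  ∀ (n : ℕ) (d : ℕ → ℝ → X), DyadicMeas 0 (d 0) →
    (∀ k, 1 ≤ k → k ≤ n → IsDyadicDiff k (d k)) →
      (∑ k ∈ Finset.range (n+1), LqNorm q (fun t => T (d k t)) ^ q) ^ (1/q) ≤
        c * LqNorm q (fun t => ∑ k ∈ Finset.range (n+1), d k t)

/-- `T` is uniformly `q`-convex with constant `c`. -/
def UnifQConvex {X Y : Type*} [NormedAddCommGroup X] [NormedSpace ℝ X]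
    [NormedAddCommGroup Y] [NormedSpace ℝ Y] (T : X →L[ℝ] Y) (q c : ℝ) : Prop :=
  ∀ xp xm : X,
    ‖(2:ℝ)⁻¹ • (T xp - T xm)‖ ≤
      c * ((‖xp‖ ^ q + ‖xm‖ ^ q) / 2 - ‖(2:ℝ)⁻¹ • (xp + xm)‖ ^ q) ^ (1/q)

/-- `T` is uniformly `p`-smooth with constant `c`. -/
def UnifPSmooth {X Y : Type*} [NormedAddCommGroup X] [NormedSpace ℝ X]
    [NormedAddCommGroup Y] [NormedSpace ℝ Y] (T : X →L[ℝ] Y) (p c : ℝ) : Prop :=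
  ∀ (x : X) (y : Y),
    ((‖y + T x‖ ^ p + ‖y - T x‖ ^ p) / 2 - ‖y‖ ^ p) ^ (1/p) ≤ c * ‖x‖


lemma integral_if_half (A B : ℝ) :
    ∫ t in (0:ℝ)..1, (if t < 1/2 then A else B) = (A + B) / 2 := by
  have hsplit : Set.Ioc (0:ℝ) 1 = Set.Ioc (0:ℝ) (1/2) ∪ Set.Ioc (1/2:ℝ) 1 :=
    (Set.Ioc_union_Ioc_eq_Ioc (by norm_num) (by norm_num)).symm
  have h12 : ∀ᵐ t : ℝ, t ≠ (1/2:ℝ) := by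
    rw [ae_iff]
    have : {t : ℝ | ¬ t ≠ (1/2:ℝ)} = {(1/2:ℝ)} := by ext t; simp
    rw [this]; exact Real.volume_singleton
  have h1 : ∀ᵐ t : ℝ, t ∈ Set.Ioc (0:ℝ) (1/2) →
      (if t < 1/2 then A else B) = A := by
    filter_upwards [h12] with t ht htm
    rw [if_pos (lt_of_le_of_ne htm.2 ht)]
  have hae : (fun t : ℝ => if t < 1/2 then A else B)
      =ᵐ[volume.restrict (Set.Ioc (0:ℝ) (1/2))] fun _ => A :=
    (ae_restrict_iff' measurableSet_Ioc).2 h1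
  have heq2 : Set.EqOn (fun t : ℝ => if t < 1/2 then A else B) (fun _ => B)
      (Set.Ioc (1/2:ℝ) 1) := by
    intro t ht; simp only; rw [if_neg (not_lt.2 ht.1.le)]
  have h2 : ∀ᵐ t : ℝ, t ∈ Set.Ioc (1/2:ℝ) 1 →
      (if t < 1/2 then A else B) = B := Filter.Eventually.of_forall heq2
  have hae2 : (fun t : ℝ => if t < 1/2 then A else B)
      =ᵐ[volume.restrict (Set.Ioc (1/2:ℝ) 1)] fun _ => B :=
    (ae_restrict_iff' measurableSet_Ioc).2 h2
  have hint1 : IntegrableOn (fun t : ℝ => if t < 1/2 then A else B)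
      (Set.Ioc (0:ℝ) (1/2)) :=
    (integrableOn_const (by simp) (by simp)).congr hae.symm
  have hint2 : IntegrableOn (fun t : ℝ => if t < 1/2 then A else B)
      (Set.Ioc (1/2:ℝ) 1) :=
    (integrableOn_const (by simp) (by simp)).congr hae2.symm
  rw [intervalIntegral.integral_of_le (by norm_num : (0:ℝ) ≤ 1), hsplit,
    setIntegral_union (Set.Ioc_disjoint_Ioc_of_le le_rfl) measurableSet_Ioc hint1 hint2,
    setIntegral_congr_ae measurableSet_Ioc h1,
    setIntegral_congr_ae measurableSet_Ioc h2, setIntegral_const, setIntegral_const]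
  rw [Real.volume_real_Ioc]
  norm_num
  ring

lemma floor_half_iff (u : ℝ) (hu : u ∈ Set.Ico (0:ℝ) 1) :
    ⌊u * 2⌋ = 0 ↔ u < 1/2 := by
  rw [Int.floor_eq_zero_iff, Set.mem_Ico]
  constructor
  · intro h
    linarith [h.2]
  · intro h
    exact ⟨by linarith [hu.1], by linarith⟩

theorem stmt_3 {X Y : Type*} [NormedAddCommGroup X] [NormedSpace ℝ X] [CompleteSpace X]
    [NormedAddCommGroup Y] [NormedSpace ℝ Y] [CompleteSpace Y]
    (q c : ℝ) (hq : 2 ≤ q) (hc : 0 < c) (T : X →L[ℝ] Y)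
    (hT : StrongMartCotype T q c) : UnifQConvex T q c := by
  intro xp xm
  have hq0 : (0:ℝ) < q := by linarith
  have hqne : q ≠ 0 := ne_of_gt hq0
  set x : X := (2:ℝ)⁻¹ • (xp + xm) with hx
  set e : X := (2:ℝ)⁻¹ • (xp - xm) with he
  have hxe1 : x + e = xp := by rw [hx, he]; module
  have hxe2 : x + -e = xm := by rw [hx, he]; module
  set d : ℕ → ℝ → X := fun k t =>
    if k = 0 then x else if k = 1 then (if t < 1/2 then e else -e) else 0 with hd
  have hd0 : d 0 = fun _ => x := by funext t; simp [hd]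
  have hdiff : ∀ k, 1 ≤ k → k ≤ 1 → IsDyadicDiff k (d k) := by
    intro k hk1 hk2
    have hk : k = 1 := le_antisymm hk2 hk1
    subst hk
    constructor
    · intro s t hs ht hfl
      simp only [hd, if_neg one_ne_zero, if_pos rfl]
      have hfl' : ⌊s * 2⌋ = ⌊t * 2⌋ := by
        simpa using hfl
      by_cases hs2 : s < 1/2 <;> by_cases ht2 : t < 1/2
      · rw [if_pos hs2, if_pos ht2]
      · exact absurd (hfl' ▸ (floor_half_iff s hs).2 hs2) (fun h => ht2 ((floor_half_iff t ht).1 h))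
      · exact absurd (hfl'.symm ▸ (floor_half_iff t ht).2 ht2) (fun h => hs2 ((floor_half_iff s hs).1 h))
      · rw [if_neg hs2, if_neg ht2]
    · intro j hj
      have hj0 : j = 0 := by omega
      subst hj0
      simp only [hd, if_neg one_ne_zero, if_pos rfl]
      norm_num
  have key := hT 1 x d hd0 hdiff
  -- compute the Icc sum
  have hd1 : ∀ t : ℝ, d 1 t = if t < 1/2 then e else -e := by
    intro t; simp [hd]
  have hTd1 : ∀ t : ℝ, ‖T (d 1 t)‖ = ‖T e‖ := by
    intro t
    rw [hd1 t]
    split_ifs with h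
    · rfl
    · rw [map_neg, norm_neg]
  have hLq1 : LqNorm q (fun t => T (d 1 t)) = ‖T e‖ := by
    unfold LqNorm
    have : (fun t : ℝ => ‖T (d 1 t)‖ ^ q) = fun _ => ‖T e‖ ^ q := by
      funext t; rw [hTd1 t]
    rw [this, intervalIntegral.integral_const, sub_zero, one_smul,
      ← Real.rpow_mul (norm_nonneg _), mul_one_div, div_self hqne, Real.rpow_one]
  -- compute the RHS
  set M : ℝ := (‖xp‖ ^ q + ‖xm‖ ^ q) / 2 with hM
  have hLqsum : LqNorm q (fun t => ∑ k ∈ Finset.range 2, d k t) = M ^ (1/q) := by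
    unfold LqNorm
    have hfun : (fun t : ℝ => ‖∑ k ∈ Finset.range 2, d k t‖ ^ q)
        = fun t => if t < 1/2 then ‖xp‖ ^ q else ‖xm‖ ^ q := by
      funext t
      rw [Finset.sum_range_succ, Finset.sum_range_one]
      have h0 : d 0 t = x := by rw [hd0]
      rw [h0, hd1 t]
      split_ifs with h
      · rw [hxe1]
      · rw [hxe2]
    rw [hfun, integral_if_half]
  rw [Finset.Icc_self, Finset.sum_singleton, hLq1] at key
  rw [show (1+1 : ℕ) = 2 from rfl, hLqsum] at key
  -- raise to q-th power
  have hbase : (0:ℝ) ≤ ‖x‖ ^ q + c⁻¹ ^ q * ‖T e‖ ^ q := by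
    positivity
  have hM0 : (0:ℝ) ≤ M := by
    rw [hM]; positivity
  have hkeyq : ‖x‖ ^ q + c⁻¹ ^ q * ‖T e‖ ^ q ≤ M := by
    have h2 := Real.rpow_le_rpow (Real.rpow_nonneg hbase _) key hq0.le
    rwa [← Real.rpow_mul hbase, ← Real.rpow_mul hM0, one_div_mul_cancel hqne,
      Real.rpow_one, Real.rpow_one] at h2
  have hcq : (0:ℝ) < c ^ q := Real.rpow_pos_of_pos hc q
  have hcinv : c⁻¹ ^ q = (c ^ q)⁻¹ := Real.inv_rpow hc.le q
  have hMx : (0:ℝ) ≤ M - ‖x‖ ^ q := by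
    have : (0:ℝ) ≤ c⁻¹ ^ q * ‖T e‖ ^ q := by positivity
    linarith
  have hTe : ‖T e‖ ^ q ≤ c ^ q * (M - ‖x‖ ^ q) := by
    rw [hcinv] at hkeyq
    have h' : (c ^ q)⁻¹ * ‖T e‖ ^ q ≤ M - ‖x‖ ^ q := by linarith
    calc ‖T e‖ ^ q = c ^ q * ((c ^ q)⁻¹ * ‖T e‖ ^ q) := by field_simp
      _ ≤ c ^ q * (M - ‖x‖ ^ q) := by nlinarith
  have hfinal : ‖T e‖ ≤ c * (M - ‖x‖ ^ q) ^ (1/q) := by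
    have h1 : (‖T e‖ ^ q) ^ (1/q) ≤ (c ^ q * (M - ‖x‖ ^ q)) ^ (1/q) :=
      Real.rpow_le_rpow (by positivity) hTe (by positivity)
    rwa [← Real.rpow_mul (norm_nonneg _), mul_one_div, div_self hqne, Real.rpow_one,
      Real.mul_rpow hcq.le hMx, ← Real.rpow_mul hc.le, mul_one_div, div_self hqne,
      Real.rpow_one] at h1
  have hTex : T e = (2:ℝ)⁻¹ • (T xp - T xm) := by
    rw [he, T.map_smul, T.map_sub]
  rw [← hTex]
  exact hfinal
end

section
/- Let 2 ≤ q < ∞ and let T : X → Y be a bounded linear operator between Banach spaces. If T is uniformly q-convex with constant c, then T has strong martingale cotype q with the same constant c. -/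
open MeasureTheory Finset

section Auxiliary

open MeasureTheory Finset

lemma floor_div_int' (x : ℝ) {n : ℤ} (hn : 0 < n) : ⌊x / (n : ℝ)⌋ = ⌊x⌋ / n := by
  have hn' : (0:ℝ) < (n:ℝ) := by exact_mod_cast hn
  have h1 := Int.mul_ediv_add_emod ⌊x⌋ n
  have h2 := Int.emod_nonneg ⌊x⌋ hn.ne'
  have h3 := Int.emod_lt_of_pos ⌊x⌋ hn
  rw [Int.floor_eq_iff]
  constructor
  · rw [le_div_iff₀ hn']
    have hle : (⌊x⌋ / n) * n ≤ ⌊x⌋ := by linarith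
    calc ((⌊x⌋ / n : ℤ) : ℝ) * n ≤ (⌊x⌋ : ℝ) := by exact_mod_cast hle
      _ ≤ x := Int.floor_le x
  · rw [div_lt_iff₀ hn']
    have hlt : ⌊x⌋ + 1 ≤ (⌊x⌋ / n + 1) * n := by linarith
    calc x < (⌊x⌋ : ℝ) + 1 := Int.lt_floor_add_one x
      _ ≤ ((⌊x⌋ / n + 1 : ℤ) : ℝ) * n := by exact_mod_cast hlt
      _ = (((⌊x⌋ / n : ℤ) : ℝ) + 1) * n := by push_cast; ring

lemma DyadicMeas.mono {X : Type*} {k m : ℕ} (hkm : k ≤ m) {f : ℝ → X}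
    (hf : DyadicMeas k f) : DyadicMeas m f := by
  intro s t hs ht hst
  refine hf s t hs ht ?_
  have hpos : (0:ℤ) < 2 ^ (m - k) := by positivity
  have hcast : (((2:ℤ) ^ (m - k) : ℤ) : ℝ) = (2:ℝ) ^ (m - k) := by push_cast; ring
  have key : ∀ u : ℝ, u * (2:ℝ) ^ k = (u * 2 ^ m) / (((2:ℤ) ^ (m - k) : ℤ) : ℝ) := by
    intro u
    rw [hcast, eq_div_iff (by positivity), mul_assoc, ← pow_add, Nat.add_sub_cancel' hkm]
  rw [key s, key t, floor_div_int' _ hpos, floor_div_int' _ hpos, hst]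

/-- normalized dyadic sum of `‖g‖^q` at level `m` -/
noncomputable def Adyad {E : Type*} [NormedAddCommGroup E] (q : ℝ) (m : ℕ) (g : ℝ → E) : ℝ :=
  ((2:ℝ) ^ m)⁻¹ * ∑ i ∈ Finset.range (2 ^ m), ‖g ((i : ℝ) / 2 ^ m)‖ ^ q

lemma Adyad_nonneg (q : ℝ) {E : Type*} [NormedAddCommGroup E] (m : ℕ) (g : ℝ → E) :
    0 ≤ Adyad q m g := by
  unfold Adyad
  exact mul_nonneg (by positivity)
    (Finset.sum_nonneg fun i _ => Real.rpow_nonneg (norm_nonneg _) q)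

lemma integral_dyadic_real {m : ℕ} {h : ℝ → ℝ} (hh : DyadicMeas m h) :
    ∫ t in (0:ℝ)..1, h t = ((2:ℝ) ^ m)⁻¹ * ∑ i ∈ Finset.range (2 ^ m), h ((i : ℝ) / 2 ^ m) := by
  have h2m : (0:ℝ) < (2:ℝ) ^ m := by positivity
  have hcast : ((2 ^ m : ℕ) : ℝ) = (2:ℝ) ^ m := by push_cast; ring
  set a : ℕ → ℝ := fun i => (i : ℝ) / 2 ^ m with ha
  have key : ∀ i, i < 2 ^ m → ∀ᵐ t : ℝ, t ∈ Set.uIoc (a i) (a (i + 1)) → h t = h (a i) := by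
    intro i hi
    have hlt : a i < a (i + 1) := by
      simp only [ha]
      rw [div_lt_div_iff₀ h2m h2m]
      push_cast
      nlinarith
    have hone : ∀ᵐ t : ℝ, t ≠ a (i + 1) := by
      rw [MeasureTheory.ae_iff]
      rw [show {t : ℝ | ¬t ≠ a (i + 1)} = {a (i + 1)} by ext t; simp]
      exact Real.volume_singleton
    filter_upwards [hone] with t htne hmem
    rw [Set.uIoc_of_le hlt.le] at hmem
    obtain ⟨ht1, ht2⟩ := hmem
    have ht2' : t < a (i + 1) := lt_of_le_of_ne ht2 htne
    have hai0 : (0:ℝ) ≤ a i := by simp only [ha]; positivity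
    have hailt1 : a i < 1 := by
      simp only [ha]; rw [div_lt_one h2m]; exact_mod_cast hi
    have hta1 : a (i + 1) ≤ 1 := by
      simp only [ha]; rw [div_le_one h2m]; exact_mod_cast Nat.succ_le_of_lt hi
    have e1 : a i * 2 ^ m = (i : ℝ) := by
      simp only [ha]; exact div_mul_cancel₀ _ (ne_of_gt h2m)
    have e2 : a (i + 1) * 2 ^ m = ((i + 1 : ℕ) : ℝ) := by
      simp only [ha]; exact div_mul_cancel₀ _ (ne_of_gt h2m)
    refine (hh (a i) t ⟨hai0, hailt1⟩
      ⟨le_trans hai0 ht1.le, lt_of_lt_of_le ht2' hta1⟩ ?_).symm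
    have f1 : ⌊a i * 2 ^ m⌋ = (i : ℤ) := by rw [e1]; exact Int.floor_natCast i
    have f2 : ⌊t * 2 ^ m⌋ = (i : ℤ) := by
      rw [Int.floor_eq_iff]
      constructor
      · push_cast
        calc (i : ℝ) = a i * 2 ^ m := e1.symm
          _ ≤ t * 2 ^ m := by nlinarith
      · have hb : t * 2 ^ m < ((i + 1 : ℕ) : ℝ) := by
          calc t * 2 ^ m < a (i + 1) * 2 ^ m := by nlinarith
            _ = _ := e2
        push_cast at hb ⊢
        linarith
    rw [f1, f2]
  have hint : ∀ i, i < 2 ^ m → IntervalIntegrable h volume (a i) (a (i + 1)) := by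
    intro i hi
    refine (intervalIntegrable_const (c := h (a i))).congr_ae ?_
    have h1 := ae_restrict_of_ae (μ := volume) (s := Set.uIoc (a i) (a (i + 1))) (key i hi)
    have h2 := ae_restrict_mem (μ := volume)
      (measurableSet_uIoc (a := a i) (b := a (i + 1)))
    filter_upwards [h1, h2] with t ht hmem
    exact (ht hmem).symm
  have hsum := intervalIntegral.sum_integral_adjacent_intervals
    (μ := volume) (f := h) (a := a) (n := 2 ^ m) hint
  have ha0 : a 0 = 0 := by simp [ha]
  have haN : a (2 ^ m) = 1 := by
    simp only [ha]; rw [hcast, div_self (ne_of_gt h2m)]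
  rw [ha0, haN] at hsum
  rw [← hsum, Finset.mul_sum]
  refine Finset.sum_congr rfl fun i hi => ?_
  have hi' := Finset.mem_range.mp hi
  rw [intervalIntegral.integral_congr_ae (key i hi'), intervalIntegral.integral_const]
  simp only [ha]
  have e : ((i + 1 : ℕ) : ℝ) / (2:ℝ) ^ m - (i : ℝ) / (2:ℝ) ^ m = ((2:ℝ) ^ m)⁻¹ := by
    rw [div_sub_div_same]
    push_cast
    rw [add_sub_cancel_left, one_div]
  rw [e, smul_eq_mul]

lemma DyadicMeas.norm_rpow {E : Type*} [NormedAddCommGroup E] {m : ℕ} {g : ℝ → E} (q : ℝ)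
    (h : DyadicMeas m g) : DyadicMeas m (fun t => ‖g t‖ ^ q) := by
  intro s t hs ht hst
  simp only
  rw [h s t hs ht hst]

lemma integral_norm_rpow_dyadic (q : ℝ) {E : Type*} [NormedAddCommGroup E] {m : ℕ} {g : ℝ → E}
    (hg : DyadicMeas m g) : ∫ t in (0:ℝ)..1, ‖g t‖ ^ q = Adyad q m g :=
  integral_dyadic_real (hg.norm_rpow q)

lemma LqNorm_eq_of_dyadic (q : ℝ) {E : Type*} [NormedAddCommGroup E] {m : ℕ} {g : ℝ → E}
    (hg : DyadicMeas m g) : LqNorm q g = Adyad q m g ^ (1/q) := by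
  unfold LqNorm
  rw [integral_norm_rpow_dyadic q hg]

lemma LqNorm_rpow_of_dyadic {q : ℝ} (hq : 0 < q) {E : Type*} [NormedAddCommGroup E] {m : ℕ}
    {g : ℝ → E} (hg : DyadicMeas m g) : LqNorm q g ^ q = Adyad q m g := by
  rw [LqNorm_eq_of_dyadic q hg, ← Real.rpow_mul (Adyad_nonneg q m g), one_div,
    inv_mul_cancel₀ (ne_of_gt hq), Real.rpow_one]

lemma sum_pair (N : ℕ) (h : ℕ → ℝ) :
    ∑ i ∈ Finset.range (2 * N), h i = ∑ j ∈ Finset.range N, (h (2 * j) + h (2 * j + 1)) := by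
  induction N with
  | zero => simp
  | succ n ih =>
    rw [Finset.sum_range_succ, ← ih, Nat.mul_succ,
      show 2 * n + 2 = (2 * n + 1) + 1 by omega, Finset.sum_range_succ, Finset.sum_range_succ]
    ring

lemma Adyad_succ (q : ℝ) {E : Type*} [NormedAddCommGroup E] (m : ℕ) (g : ℝ → E) :
    Adyad q (m + 1) g = ((2:ℝ) ^ m)⁻¹ * ∑ j ∈ Finset.range (2 ^ m),
      (‖g (((2 * j : ℕ) : ℝ) / (2:ℝ) ^ (m + 1))‖ ^ q
        + ‖g (((2 * j + 1 : ℕ) : ℝ) / (2:ℝ) ^ (m + 1))‖ ^ q) / 2 := by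
  have hN : 2 * 2 ^ m = 2 ^ (m + 1) := by rw [pow_succ, Nat.mul_comm]
  have h2 := sum_pair (2 ^ m) (fun i => ‖g ((i : ℝ) / (2:ℝ) ^ (m + 1))‖ ^ q)
  rw [hN] at h2
  unfold Adyad
  rw [h2, Finset.mul_sum, Finset.mul_sum]
  refine Finset.sum_congr rfl fun j _ => ?_
  have h2e : ((2:ℝ)) ^ (m + 1) = 2 * 2 ^ m := by rw [pow_succ]; ring
  rw [h2e, mul_inv]
  ring

lemma half_rpow {q a b : ℝ} (hq : 1 ≤ q) (ha : 0 ≤ a) (hb : 0 ≤ b) :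
    ((a + b) / 2) ^ q ≤ (a ^ q + b ^ q) / 2 := by
  have h := (convexOn_rpow hq).2 (Set.mem_Ici.mpr ha) (Set.mem_Ici.mpr hb)
    (by norm_num : (0:ℝ) ≤ 1/2) (by norm_num : (0:ℝ) ≤ 1/2) (by norm_num)
  simp only [smul_eq_mul] at h
  have e1 : (1/2 : ℝ) * a + (1/2 : ℝ) * b = (a + b) / 2 := by ring
  rw [e1] at h
  linarith

lemma key_ineq {X Y : Type*} [NormedAddCommGroup X] [NormedSpace ℝ X]
    [NormedAddCommGroup Y] [NormedSpace ℝ Y] {q c : ℝ} (hq : 2 ≤ q) (hc : 0 < c)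
    (T : X →L[ℝ] Y) (hT : UnifQConvex T q c) (xp xm : X) :
    ‖(2:ℝ)⁻¹ • (xp + xm)‖ ^ q + c⁻¹ ^ q * ‖T ((2:ℝ)⁻¹ • (xp - xm))‖ ^ q
      ≤ (‖xp‖ ^ q + ‖xm‖ ^ q) / 2 := by
  have hq0 : (0:ℝ) < q := by linarith
  have hq1 : (1:ℝ) ≤ q := by linarith
  set E := (‖xp‖ ^ q + ‖xm‖ ^ q) / 2 - ‖(2:ℝ)⁻¹ • (xp + xm)‖ ^ q with hE
  have hEnn : 0 ≤ E := by
    have h1 : ‖(2:ℝ)⁻¹ • (xp + xm)‖ ≤ (‖xp‖ + ‖xm‖) / 2 := by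
      rw [norm_smul, norm_inv, Real.norm_two]
      have := norm_add_le xp xm
      linarith
    have h2 : ‖(2:ℝ)⁻¹ • (xp + xm)‖ ^ q ≤ ((‖xp‖ + ‖xm‖) / 2) ^ q :=
      Real.rpow_le_rpow (norm_nonneg _) h1 hq0.le
    have h3 : ((‖xp‖ + ‖xm‖) / 2) ^ q ≤ (‖xp‖ ^ q + ‖xm‖ ^ q) / 2 :=
      half_rpow hq1 (norm_nonneg _) (norm_nonneg _)
    simp only [hE]
    linarith
  have hT' := hT xp xm
  have hTe : (2:ℝ)⁻¹ • (T xp - T xm) = T ((2:ℝ)⁻¹ • (xp - xm)) := by rw [ContinuousLinearMap.map_smul, map_sub]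
  rw [hTe] at hT'
  have h4 : ‖T ((2:ℝ)⁻¹ • (xp - xm))‖ ^ q ≤ c ^ q * E := by
    have h := Real.rpow_le_rpow (norm_nonneg _) hT' hq0.le
    rwa [Real.mul_rpow hc.le (Real.rpow_nonneg hEnn _), ← Real.rpow_mul hEnn, one_div,
      inv_mul_cancel₀ hq0.ne', Real.rpow_one] at h
  have hcq : (0:ℝ) < c ^ q := Real.rpow_pos_of_pos hc q
  have h5 : c⁻¹ ^ q * ‖T ((2:ℝ)⁻¹ • (xp - xm))‖ ^ q ≤ E := by
    rw [Real.inv_rpow hc.le, inv_mul_le_iff₀ hcq]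
    exact h4
  simp only [hE] at h5
  linarith

end Auxiliary

theorem stmt_4 {X Y : Type*} [NormedAddCommGroup X] [NormedSpace ℝ X] [CompleteSpace X]
    [NormedAddCommGroup Y] [NormedSpace ℝ Y] [CompleteSpace Y]
    (q c : ℝ) (hq : 2 ≤ q) (hc : 0 < c) (T : X →L[ℝ] Y)
    (hT : UnifQConvex T q c) : StrongMartCotype T q c := by
  intro n x d hd0 hdk
  have hq0 : (0:ℝ) < q := by linarith
  have hdm : ∀ k, k ≤ n → DyadicMeas k (d k) := by
    intro k hk
    rcases Nat.eq_zero_or_pos k with h0 | h1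
    · subst h0
      intro s t _ _ _
      rw [hd0]
    · exact (hdk k h1 hk).1
  have hfm : ∀ m, m ≤ n → DyadicMeas m (fun t => ∑ i ∈ Finset.range (m + 1), d i t) := by
    intro m hm s t hs ht hst
    refine Finset.sum_congr rfl fun k hk => ?_
    exact DyadicMeas.mono (Nat.lt_succ_iff.mp (Finset.mem_range.mp hk))
      (hdm k (le_trans (Nat.lt_succ_iff.mp (Finset.mem_range.mp hk)) hm)) s t hs ht hst
  -- main induction
  have main : ∀ m, m ≤ n →
      ‖x‖ ^ q + c⁻¹ ^ q * ∑ k ∈ Finset.Icc 1 m, Adyad q k (fun t => T (d k t))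
        ≤ Adyad q m (fun t => ∑ i ∈ Finset.range (m + 1), d i t) := by
    intro m
    induction m with
    | zero =>
      intro _
      rw [show Finset.Icc 1 0 = (∅ : Finset ℕ) from Finset.Icc_eq_empty (by omega)]
      simp [Adyad, hd0]
    | succ m ih =>
      intro hm1
      have hm : m ≤ n := by omega
      have ih' := ih hm
      have hstep : Adyad q m (fun t => ∑ i ∈ Finset.range (m + 1), d i t)
          + c⁻¹ ^ q * Adyad q (m + 1) (fun t => T (d (m + 1) t))
          ≤ Adyad q (m + 1) (fun t => ∑ i ∈ Finset.range (m + 1 + 1), d i t) := by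
        rw [Adyad_succ, Adyad_succ]
        unfold Adyad
        simp only []
        have rearr : ∀ S1 S2 : ℝ,
            ((2:ℝ) ^ m)⁻¹ * S1 + c⁻¹ ^ q * (((2:ℝ) ^ m)⁻¹ * S2)
              = ((2:ℝ) ^ m)⁻¹ * (S1 + c⁻¹ ^ q * S2) := by
          intro S1 S2; ring
        rw [rearr]
        refine mul_le_mul_of_nonneg_left ?_ (by positivity)
        rw [Finset.mul_sum, ← Finset.sum_add_distrib]
        refine Finset.sum_le_sum fun j hj => ?_
        have hjN : j < 2 ^ m := Finset.mem_range.mp hj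
        have h2m : (0:ℝ) < (2:ℝ) ^ m := by positivity
        have h2m1 : (0:ℝ) < (2:ℝ) ^ (m + 1) := by positivity
        set u : ℝ := ((2 * j : ℕ) : ℝ) / (2:ℝ) ^ (m + 1) with hu0
        set v : ℝ := ((2 * j + 1 : ℕ) : ℝ) / (2:ℝ) ^ (m + 1) with hv0
        have hu : u = (j : ℝ) / (2:ℝ) ^ m := by
          rw [hu0, pow_succ, div_eq_div_iff (by positivity) (by positivity)]
          push_cast
          ring
        have humem : u ∈ Set.Ico (0:ℝ) 1 := by
          constructor
          · rw [hu0]; positivity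
          · rw [hu, div_lt_one h2m]; exact_mod_cast hjN
        have hvmem : v ∈ Set.Ico (0:ℝ) 1 := by
          constructor
          · rw [hv0]; positivity
          · rw [hv0, div_lt_one h2m1, pow_succ]
            push_cast
            have : (j : ℝ) + 1 ≤ (2:ℝ) ^ m := by exact_mod_cast Nat.succ_le_of_lt hjN
            linarith
        have hfloor : ⌊u * (2:ℝ) ^ m⌋ = ⌊v * (2:ℝ) ^ m⌋ := by
          have e1 : u * (2:ℝ) ^ m = (j : ℝ) := by
            rw [hu]; exact div_mul_cancel₀ _ (ne_of_gt h2m)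
          have e2 : v * (2:ℝ) ^ m = (j : ℝ) + 1/2 := by
            rw [hv0, pow_succ]
            push_cast
            field_simp
          rw [e1, e2, Int.floor_natCast]
          symm
          rw [Int.floor_eq_iff]
          constructor
          · push_cast; linarith
          · push_cast; linarith
        have hEq : ∑ i ∈ Finset.range (m + 1), d i u = ∑ i ∈ Finset.range (m + 1), d i v :=
          hfm m hm u v humem hvmem hfloor
        have hlt2 : 2 * j + 1 < 2 ^ (m + 1) := by
          have : (2:ℕ) ^ (m + 1) = 2 * 2 ^ m := by rw [pow_succ]; ring
          omega
        have h1 := (hdk (m + 1) (by omega) hm1).2 j hlt2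
        have hdd : d (m + 1) u = - d (m + 1) v := by
          rw [hu0, hv0]
          push_cast
          exact h1
        have hdv : d (m + 1) v = - d (m + 1) u := by rw [hdd, neg_neg]
        have hxp : ∑ i ∈ Finset.range (m + 1 + 1), d i u
            = (∑ i ∈ Finset.range (m + 1), d i u) + d (m + 1) u :=
          Finset.sum_range_succ _ _
        have hxm : ∑ i ∈ Finset.range (m + 1 + 1), d i v
            = (∑ i ∈ Finset.range (m + 1), d i u) - d (m + 1) u := by
          rw [Finset.sum_range_succ, ← hEq, hdv]
          abel
        have hk := key_ineq hq hc T hT (∑ i ∈ Finset.range (m + 1 + 1), d i u)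
          (∑ i ∈ Finset.range (m + 1 + 1), d i v)
        have e1 : (2:ℝ)⁻¹ • ((∑ i ∈ Finset.range (m + 1 + 1), d i u)
            + (∑ i ∈ Finset.range (m + 1 + 1), d i v)) = ∑ i ∈ Finset.range (m + 1), d i u := by
          rw [hxp, hxm]
          module
        have e2 : (2:ℝ)⁻¹ • ((∑ i ∈ Finset.range (m + 1 + 1), d i u)
            - (∑ i ∈ Finset.range (m + 1 + 1), d i v)) = d (m + 1) u := by
          rw [hxp, hxm]
          module
        rw [e1, e2] at hk
        have hfmu : ∑ i ∈ Finset.range (m + 1), d i u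
            = ∑ i ∈ Finset.range (m + 1), d i ((j : ℝ) / (2:ℝ) ^ m) := by rw [hu]
        rw [hfmu] at hk
        have hTv : ‖T (d (m + 1) v)‖ = ‖T (d (m + 1) u)‖ := by
          rw [hdv, map_neg, norm_neg]
        rw [hTv]
        have hhalf : (‖T (d (m + 1) u)‖ ^ q + ‖T (d (m + 1) u)‖ ^ q) / 2
            = ‖T (d (m + 1) u)‖ ^ q := by ring
        rw [hhalf]
        exact hk
      rw [Finset.sum_Icc_succ_top (by omega : 1 ≤ m + 1), mul_add]
      linarith
  -- convert the statement to Adyad form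
  have hrw : ∀ k ∈ Finset.Icc 1 n,
      LqNorm q (fun t => T (d k t)) ^ q = Adyad q k (fun t => T (d k t)) := by
    intro k hk
    obtain ⟨hk1, hk2⟩ := Finset.mem_Icc.mp hk
    have hmeas : DyadicMeas k (fun t => T (d k t)) := by
      intro s t hs ht h
      simp only
      rw [hdm k hk2 s t hs ht h]
    exact LqNorm_rpow_of_dyadic hq0 hmeas
  rw [Finset.sum_congr rfl hrw, LqNorm_eq_of_dyadic q (hfm n le_rfl)]
  refine Real.rpow_le_rpow ?_ (main n le_rfl) (one_div_nonneg.mpr hq0.le)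
  exact add_nonneg (Real.rpow_nonneg (norm_nonneg x) q)
    (mul_nonneg (Real.rpow_nonneg (inv_nonneg.mpr hc.le) q)
      (Finset.sum_nonneg fun k _ => Adyad_nonneg q k _))
end

section
/- Let 1 ≤ p ≤ 2 and let T : X → Y be a bounded linear operator between Banach spaces. If T has strong martingale type p with constant c, then T is uniformly p-smooth with the same constant c; i.e., ((‖y + Tx‖^p + ‖y − Tx‖^p)/2 − ‖y‖^p)^{1/p} ≤ c‖x‖ for all x ∈ X, y ∈ Y. -/
open MeasureTheory Finset

theorem integ_piece (A B : ℝ) :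
    ∫ t in (0:ℝ)..1, (if ⌊t*2⌋ = 0 then A else B) = (A+B)/2 := by
  have hint : ∀ a b : ℝ, IntervalIntegrable (fun t => if ⌊t*2⌋ = 0 then A else B) volume a b := by
    intro a b
    apply intervalIntegrable_iff.mpr
    apply Measure.integrableOn_of_bounded (measure_Ioc_lt_top).ne
      (M := |A| + |B|)
    · exact (Measurable.ite (measurableSet_eq_fun (by measurability) measurable_const)
        measurable_const measurable_const).aestronglyMeasurable
    · filter_upwards with t
      split_ifs <;> simp only [Real.norm_eq_abs] <;>
        linarith [abs_nonneg A, abs_nonneg B]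
  have hsplit := intervalIntegral.integral_add_adjacent_intervals (a := (0:ℝ)) (b := 1/2) (c := 1)
    (hint 0 (1/2)) (hint (1/2) 1)
  rw [← hsplit]
  have h1 : ∫ t in (0:ℝ)..(1/2), (if ⌊t*2⌋ = 0 then A else B) = A/2 := by
    have hae : ∀ᵐ t : ℝ ∂volume, t ∈ Set.uIoc (0:ℝ) (1/2) →
        (if ⌊t*2⌋ = 0 then A else B) = A := by
      have hne : ∀ᵐ t : ℝ ∂volume, t ≠ (1/2:ℝ) := by
        rw [ae_iff]
        simpa using measure_singleton (1/2 : ℝ)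
      filter_upwards [hne] with t ht htm
      rw [Set.uIoc_of_le (by norm_num)] at htm
      have h1 : 0 < t * 2 := by nlinarith [htm.1]
      have h2 : t * 2 < 1 := by
        rcases lt_or_eq_of_le htm.2 with h | h; nlinarith; exact absurd h ht
      rw [if_pos (Int.floor_eq_zero_iff.mpr ⟨le_of_lt h1, h2⟩)]
    rw [intervalIntegral.integral_congr_ae hae]
    simp; ring
  have h2 : ∫ t in (1/2:ℝ)..1, (if ⌊t*2⌋ = 0 then A else B) = B/2 := by
    have heq : Set.EqOn (fun t : ℝ => if ⌊t*2⌋ = 0 then A else B) (fun _ => B)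
        (Set.uIcc (1/2:ℝ) 1) := by
      intro t htm
      rw [Set.uIcc_of_le (by norm_num)] at htm
      have : (1:ℤ) ≤ ⌊t*2⌋ := by
        rw [Int.le_floor]; push_cast; linarith [htm.1]
      simp only [if_neg (by omega : ¬ ⌊t*2⌋ = 0)]
    rw [intervalIntegral.integral_congr heq]
    simp; ring
  rw [h1, h2]; ring

theorem stmt_5 {X Y : Type*} [NormedAddCommGroup X] [NormedSpace ℝ X] [CompleteSpace X]
    [NormedAddCommGroup Y] [NormedSpace ℝ Y] [CompleteSpace Y]
    (p c : ℝ) (hp1 : 1 ≤ p) (hp2 : p ≤ 2) (hc : 0 < c) (T : X →L[ℝ] Y)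
    (hT : StrongMartType T p c) : UnifPSmooth T p c := by
  intro x y
  have hp0 : (0:ℝ) < p := lt_of_lt_of_le one_pos hp1
  have hpne : p ≠ 0 := ne_of_gt hp0
  set d : ℕ → ℝ → X := fun _ t => if ⌊t*2⌋ = 0 then x else -x with hd
  have hdiff : ∀ k, 1 ≤ k → k ≤ 1 → IsDyadicDiff k (d k) := by
    intro k hk1 hk2
    have hk : k = 1 := le_antisymm hk2 hk1
    subst hk
    constructor
    · intro s t _ _ hst
      rw [show ((2:ℝ)^(1:ℕ)) = 2 by norm_num] at hst
      simp only [hd, hst]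
    · intro j hj
      have hj0 : j = 0 := by
        have : 2^(1:ℕ) = 2 := by norm_num
        omega
      subst hj0
      simp only [hd]
      norm_num
  have key := hT 1 d hdiff y
  rw [Finset.Icc_self] at key
  simp only [Finset.sum_singleton] at key
  have hd1 : LqNorm p (d 1) ^ p = ‖x‖ ^ p := by
    unfold LqNorm
    have hpt : ∀ t : ℝ, ‖d 1 t‖ ^ p = ‖x‖ ^ p := by
      intro t; simp only [hd]; split_ifs <;> simp
    simp only [hpt]
    rw [intervalIntegral.integral_const]
    simp only [sub_zero, one_smul]
    rw [← Real.rpow_mul (Real.rpow_nonneg (norm_nonneg x) p),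
      one_div_mul_cancel hpne, Real.rpow_one]
  have hL : LqNorm p (fun t => y + T (d 1 t))
      = ((‖y + T x‖^p + ‖y - T x‖^p)/2)^(1/p) := by
    unfold LqNorm
    have hpt : ∀ t : ℝ, ‖y + T (d 1 t)‖ ^ p
        = if ⌊t*2⌋ = 0 then ‖y + T x‖^p else ‖y - T x‖^p := by
      intro t; simp only [hd]; split_ifs <;> simp [sub_eq_add_neg]
    simp only [hpt]
    rw [integ_piece]
  rw [hL, hd1] at key
  set M := (‖y + T x‖^p + ‖y - T x‖^p)/2 with hM
  have hM0 : 0 ≤ M := by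
    have := Real.rpow_nonneg (norm_nonneg (y + T x)) p
    have := Real.rpow_nonneg (norm_nonneg (y - T x)) p
    rw [hM]; linarith
  have hB0 : (0:ℝ) ≤ ‖y‖^p + c^p * ‖x‖^p := by positivity
  have hMB : M ≤ ‖y‖^p + c^p * ‖x‖^p := by
    have h2 := Real.rpow_le_rpow (Real.rpow_nonneg hM0 _) key (le_of_lt hp0)
    rwa [← Real.rpow_mul hM0, ← Real.rpow_mul hB0, one_div_mul_cancel hpne,
      Real.rpow_one, Real.rpow_one] at h2
  rcases lt_or_ge (M - ‖y‖^p) 0 with h | h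
  · rw [Real.rpow_def_of_neg h]
    have hp_inv : 1/2 ≤ 1/p ∧ 1/p ≤ 1 := by
      constructor
      · rw [div_le_div_iff₀ (by norm_num) hp0]; linarith
      · rw [div_le_one hp0]; linarith
    have hcos : Real.cos (1/p * Real.pi) ≤ 0 := by
      apply Real.cos_nonpos_of_pi_div_two_le_of_le
      · nlinarith [Real.pi_pos, hp_inv.1]
      · nlinarith [Real.pi_pos, hp_inv.2]
    have hle : Real.exp (Real.log (M - ‖y‖^p) * (1/p)) * Real.cos (1/p * Real.pi) ≤ 0 :=
      mul_nonpos_iff.mpr (Or.inl ⟨(Real.exp_pos _).le, hcos⟩)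
    calc Real.exp (Real.log (M - ‖y‖^p) * (1/p)) * Real.cos (1/p * Real.pi) ≤ 0 := hle
      _ ≤ c * ‖x‖ := by positivity
  · have hle : M - ‖y‖^p ≤ c^p * ‖x‖^p := by linarith
    calc (M - ‖y‖^p)^(1/p) ≤ (c^p * ‖x‖^p)^(1/p) :=
        Real.rpow_le_rpow h hle (by positivity)
      _ = c * ‖x‖ := by
        rw [← Real.mul_rpow hc.le (norm_nonneg x),
          ← Real.rpow_mul (by positivity), mul_one_div_cancel hpne, Real.rpow_one]
end

section
/- Let 1 ≤ p ≤ 2 and let T : X → Y be a bounded linear operator between Banach spaces. If T is uniformly p-smooth with constant c, then T has strong martingale type p with the same constant c. -/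
open MeasureTheory Finset

lemma floor_half_eq {x y : ℝ} (h : ⌊x⌋ = ⌊y⌋) : ⌊x / 2⌋ = ⌊y / 2⌋ := by
  set z := ⌊y / 2⌋ with hz
  have h1 : (z : ℝ) ≤ y / 2 := Int.floor_le _
  have h2 : y / 2 < z + 1 := Int.lt_floor_add_one _
  have h3 : ((2 * z : ℤ) : ℝ) ≤ y := by push_cast; linarith
  have h4 : y < ((2 * z + 2 : ℤ) : ℝ) := by push_cast; linarith
  have h5 : (2 * z : ℤ) ≤ ⌊y⌋ := Int.le_floor.mpr h3
  have h6 : ⌊y⌋ < (2 * z + 2 : ℤ) := Int.floor_lt.mpr h4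
  rw [← h] at h5 h6
  have h7 : ((2 * z : ℤ) : ℝ) ≤ x := Int.le_floor.mp h5
  have h8 : x < ((2 * z + 2 : ℤ) : ℝ) := Int.floor_lt.mp h6
  push_cast at h7 h8
  rw [Int.floor_eq_iff]
  constructor <;> push_cast <;> linarith

lemma floor_level_mono {k m : ℕ} (hkm : k ≤ m) {s t : ℝ}
    (h : ⌊s * 2 ^ m⌋ = ⌊t * 2 ^ m⌋) : ⌊s * 2 ^ k⌋ = ⌊t * 2 ^ k⌋ := by
  obtain ⟨j, rfl⟩ := Nat.exists_eq_add_of_le hkm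
  induction j with
  | zero => simpa using h
  | succ j ih =>
    apply ih (Nat.le_add_right _ _)
    have h2 := floor_half_eq h
    have e1 : s * 2 ^ (k + (j+1)) / 2 = s * 2 ^ (k + j) := by ring
    have e2 : t * 2 ^ (k + (j+1)) / 2 = t * 2 ^ (k + j) := by ring
    rwa [e1, e2] at h2

lemma sum_range_two_mul' (m : ℕ) (f : ℕ → ℝ) :
    ∑ i ∈ range (2 * m), f i = ∑ j ∈ range m, (f (2 * j) + f (2 * j + 1)) := by
  induction m with
  | zero => simp
  | succ m ih =>
    have h : 2 * (m + 1) = (2 * m + 1) + 1 := by ring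
    rw [h, sum_range_succ, sum_range_succ, ih, sum_range_succ]
    ring

lemma integral_dyadic (n : ℕ) (f : ℝ → ℝ)
    (hf : ∀ s t : ℝ, s ∈ Set.Ico (0:ℝ) 1 → t ∈ Set.Ico (0:ℝ) 1 →
      ⌊s * 2 ^ n⌋ = ⌊t * 2 ^ n⌋ → f s = f t) :
    ∫ t in (0:ℝ)..1, f t = (∑ i ∈ range (2 ^ n), f ((i : ℝ) / 2 ^ n)) / 2 ^ n := by
  set a : ℕ → ℝ := fun i => (i : ℝ) / 2 ^ n with ha
  have hpow : (0:ℝ) < 2 ^ n := by positivity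
  have hconst : ∀ i : ℕ, i < 2 ^ n → ∀ t ∈ Set.Ico (a i) (a (i+1)), f t = f (a i) := by
    intro i hi t ht
    have hai : (0:ℝ) ≤ a i := by positivity
    have hlt : a (i+1) ≤ 1 := by
      rw [ha]
      simp only [div_le_one hpow]
      exact_mod_cast Nat.succ_le_of_lt hi
    have hilt : (i : ℝ) < 2 ^ n := by exact_mod_cast hi
    apply hf
    · exact ⟨le_trans hai ht.1, lt_of_lt_of_le ht.2 hlt⟩
    · refine ⟨hai, ?_⟩
      rw [ha]; simpa [div_lt_one hpow] using hilt
    · have h3 : a i * 2 ^ n = (i : ℝ) := by show (i:ℝ) / 2 ^ n * 2 ^ n = (i : ℝ); field_simp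
      have h4 : a (i+1) * 2 ^ n = (i : ℝ) + 1 := by
        show ((i+1:ℕ):ℝ) / 2 ^ n * 2 ^ n = (i : ℝ) + 1
        push_cast; field_simp
      have h1 : ((i:ℤ) : ℝ) ≤ t * 2 ^ n := by
        push_cast; nlinarith [ht.1]
      have h2 : t * 2 ^ n < ((i:ℤ) : ℝ) + 1 := by
        push_cast; nlinarith [ht.2]
      rw [Int.floor_eq_iff.mpr ⟨h1, by exact_mod_cast h2⟩]
      symm
      rw [h3, Int.floor_eq_iff]
      constructor
      · simp
      · push_cast; linarith
  have hle : ∀ i : ℕ, a i ≤ a (i + 1) := by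
    intro i
    show (i:ℝ) / 2 ^ n ≤ ((i+1:ℕ):ℝ) / 2 ^ n
    gcongr
    push_cast; linarith
  have hae : ∀ i : ℕ, i < 2 ^ n →
      f =ᵐ[volume.restrict (Set.Ioc (a i) (a (i+1)))] fun _ => f (a i) := by
    intro i hi
    have hsing : volume ({a (i+1)} : Set ℝ) = 0 := measure_singleton _
    have h0 : ∀ᵐ t ∂(volume.restrict (Set.Ioc (a i) (a (i+1)))), t ∉ ({a (i+1)} : Set ℝ) := by
      apply ae_restrict_of_ae
      exact measure_eq_zero_iff_ae_notMem.mp hsing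
    have h1 : ∀ᵐ t ∂(volume.restrict (Set.Ioc (a i) (a (i+1)))),
        t ∈ Set.Ioc (a i) (a (i+1)) := ae_restrict_mem measurableSet_Ioc
    filter_upwards [h0, h1] with t ht0 ht1
    apply hconst i hi
    refine ⟨le_of_lt ht1.1, lt_of_le_of_ne ht1.2 ?_⟩
    simpa using ht0
  have hval : ∀ i : ℕ, i < 2 ^ n →
      ∫ t in (a i)..(a (i+1)), f t = f (a i) / 2 ^ n := by
    intro i hi
    rw [intervalIntegral.integral_of_le (hle i), integral_congr_ae (hae i hi),
      setIntegral_const, Real.volume_real_Ioc_of_le (hle i)]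
    have hd : a (i+1) - a i = 1 / 2 ^ n := by
      show ((i+1:ℕ):ℝ) / 2 ^ n - (i:ℝ) / 2 ^ n = 1 / 2 ^ n
      push_cast; ring
    rw [hd, smul_eq_mul]
    ring
  have hint : ∀ i : ℕ, i < 2 ^ n → IntervalIntegrable f volume (a i) (a (i+1)) := by
    intro i hi
    rw [intervalIntegrable_iff, Set.uIoc_of_le (hle i)]
    exact (integrableOn_const measure_Ioc_lt_top.ne).congr (hae i hi).symm
  have hsum := intervalIntegral.sum_integral_adjacent_intervals (μ := volume)
    (a := a) (n := 2 ^ n) (fun k hk => hint k hk)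
  have ha0 : a 0 = 0 := by simp [ha]
  have haN : a (2 ^ n) = 1 := by rw [ha]; push_cast; field_simp
  rw [ha0, haN] at hsum
  rw [← hsum, Finset.sum_congr rfl (fun i hi => hval i (Finset.mem_range.mp hi)),
    ← Finset.sum_div]

lemma smooth_pair {X Y : Type*} [NormedAddCommGroup X] [NormedSpace ℝ X]
    [NormedAddCommGroup Y] [NormedSpace ℝ Y] {p c : ℝ} (hp1 : 1 ≤ p) (hc : 0 < c)
    {T : X →L[ℝ] Y} (hT : UnifPSmooth T p c) (u : Y) (v : X) :
    ‖u + T v‖ ^ p + ‖u - T v‖ ^ p ≤ 2 * (‖u‖ ^ p + c ^ p * ‖v‖ ^ p) := by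
  have hp0 : (0:ℝ) < p := lt_of_lt_of_le one_pos hp1
  have hcv : (0:ℝ) ≤ c ^ p * ‖v‖ ^ p :=
    mul_nonneg (Real.rpow_nonneg hc.le _) (Real.rpow_nonneg (norm_nonneg _) _)
  have h1 := hT v u
  by_cases h : (‖u + T v‖ ^ p + ‖u - T v‖ ^ p) / 2 - ‖u‖ ^ p ≤ 0
  · linarith
  · push_neg at h
    have h2 : (((‖u + T v‖ ^ p + ‖u - T v‖ ^ p) / 2 - ‖u‖ ^ p) ^ (1/p)) ^ p
        = (‖u + T v‖ ^ p + ‖u - T v‖ ^ p) / 2 - ‖u‖ ^ p := by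
      rw [← Real.rpow_mul h.le, one_div_mul_cancel (ne_of_gt hp0), Real.rpow_one]
    have h3 := Real.rpow_le_rpow (Real.rpow_nonneg h.le (1/p)) h1 hp0.le
    rw [h2, Real.mul_rpow hc.le (norm_nonneg v)] at h3
    linarith

theorem stmt_6 {X Y : Type*} [NormedAddCommGroup X] [NormedSpace ℝ X] [CompleteSpace X]
    [NormedAddCommGroup Y] [NormedSpace ℝ Y] [CompleteSpace Y]
    (p c : ℝ) (hp1 : 1 ≤ p) (hp2 : p ≤ 2) (hc : 0 < c) (T : X →L[ℝ] Y)
    (hT : UnifPSmooth T p c) : StrongMartType T p c := by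
  intro n d hd y
  have hp0 : (0:ℝ) < p := lt_of_lt_of_le one_pos hp1
  have hInt_nonneg : ∀ g : ℝ → Y, (0:ℝ) ≤ ∫ t in (0:ℝ)..1, ‖g t‖ ^ p := fun g =>
    intervalIntegral.integral_nonneg zero_le_one (fun t _ => Real.rpow_nonneg (norm_nonneg _) _)
  have hIntX_nonneg : ∀ g : ℝ → X, (0:ℝ) ≤ ∫ t in (0:ℝ)..1, ‖g t‖ ^ p := fun g =>
    intervalIntegral.integral_nonneg zero_le_one (fun t _ => Real.rpow_nonneg (norm_nonneg _) _)
  have hcp : (0:ℝ) ≤ c ^ p := Real.rpow_nonneg hc.le _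
  have key : ∀ m : ℕ, (∀ k, 1 ≤ k → k ≤ m → IsDyadicDiff k (d k)) →
      (∫ t in (0:ℝ)..1, ‖y + ∑ k ∈ Icc 1 m, T (d k t)‖ ^ p) ≤
        ‖y‖ ^ p + c ^ p * ∑ k ∈ Icc 1 m, ∫ t in (0:ℝ)..1, ‖d k t‖ ^ p := by
    intro m
    induction m with
    | zero =>
      intro _
      have he : (Icc 1 0 : Finset ℕ) = ∅ := Finset.Icc_eq_empty (by norm_num)
      rw [he]
      simp only [Finset.sum_empty, add_zero, mul_zero]
      rw [intervalIntegral.integral_const]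
      simp
    | succ m ih =>
      intro hdm
      have ihm := ih (fun k h1 h2 => hdm k h1 (h2.trans (Nat.le_succ m)))
      have hdd := hdm (m+1) (by omega) le_rfl
      have h2powN : (2:ℕ) ^ (m+1) = 2 * 2 ^ m := by rw [pow_succ]; ring
      have h2powR : (2:ℝ) ^ (m+1) = 2 * 2 ^ m := by rw [pow_succ]; ring
      have hpow : (0:ℝ) < 2 ^ m := by positivity
      have hpow1 : (0:ℝ) < 2 ^ (m+1) := by positivity
      have hmeasAll : ∀ (M : ℕ) (s t : ℝ), s ∈ Set.Ico (0:ℝ) 1 → t ∈ Set.Ico (0:ℝ) 1 →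
          ⌊s * 2 ^ M⌋ = ⌊t * 2 ^ M⌋ → ∀ k ∈ Icc 1 (min M (m+1)), d k s = d k t := by
        intro M s t hs ht hft k hk
        obtain ⟨hk1, hk2⟩ := Finset.mem_Icc.mp hk
        exact (hdm k hk1 (le_of_le_of_eq (le_min_iff.mp hk2).2 rfl)).1 s t hs ht
          (floor_level_mono (le_min_iff.mp hk2).1 hft)
      -- integral identities
      have hI1 : (∫ t in (0:ℝ)..1, ‖y + ∑ k ∈ Icc 1 (m+1), T (d k t)‖ ^ p)
          = (∑ i ∈ range (2 ^ (m+1)),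
              ‖y + ∑ k ∈ Icc 1 (m+1), T (d k ((i:ℝ) / 2 ^ (m+1)))‖ ^ p) / 2 ^ (m+1) := by
        apply integral_dyadic
        intro s t hs ht hft
        have := hmeasAll (m+1) s t hs ht hft
        simp only [min_self] at this
        have hsum : (∑ k ∈ Icc 1 (m+1), T (d k s)) = ∑ k ∈ Icc 1 (m+1), T (d k t) :=
          Finset.sum_congr rfl (fun k hk => by rw [this k hk])
        rw [hsum]
      have hI0 : (∫ t in (0:ℝ)..1, ‖y + ∑ k ∈ Icc 1 m, T (d k t)‖ ^ p)
          = (∑ j ∈ range (2 ^ m),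
              ‖y + ∑ k ∈ Icc 1 m, T (d k ((j:ℝ) / 2 ^ m))‖ ^ p) / 2 ^ m := by
        apply integral_dyadic
        intro s t hs ht hft
        have := hmeasAll m s t hs ht hft
        have hmin : min m (m+1) = m := min_eq_left (Nat.le_succ m)
        rw [hmin] at this
        have hsum : (∑ k ∈ Icc 1 m, T (d k s)) = ∑ k ∈ Icc 1 m, T (d k t) :=
          Finset.sum_congr rfl (fun k hk => by rw [this k hk])
        rw [hsum]
      have hId : (∫ t in (0:ℝ)..1, ‖d (m+1) t‖ ^ p)
          = (∑ i ∈ range (2 ^ (m+1)), ‖d (m+1) ((i:ℝ) / 2 ^ (m+1))‖ ^ p) / 2 ^ (m+1) := by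
        apply integral_dyadic
        intro s t hs ht hft
        rw [hdd.1 s t hs ht hft]
      -- the pointwise pair bound
      have hFeq : ∀ s t : ℝ, s ∈ Set.Ico (0:ℝ) 1 → t ∈ Set.Ico (0:ℝ) 1 →
          ⌊s * 2 ^ m⌋ = ⌊t * 2 ^ m⌋ →
          (∑ k ∈ Icc 1 m, T (d k s)) = ∑ k ∈ Icc 1 m, T (d k t) := by
        intro s t hs ht hft
        refine Finset.sum_congr rfl (fun k hk => ?_)
        obtain ⟨hk1, hk2⟩ := Finset.mem_Icc.mp hk
        rw [(hdm k hk1 (hk2.trans (Nat.le_succ m))).1 s t hs ht (floor_level_mono hk2 hft)]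
      have hpair : ∀ j ∈ range (2 ^ m),
          ‖y + ∑ k ∈ Icc 1 (m+1), T (d k (((2*j : ℕ):ℝ) / 2 ^ (m+1)))‖ ^ p
            + ‖y + ∑ k ∈ Icc 1 (m+1), T (d k (((2*j+1 : ℕ):ℝ) / 2 ^ (m+1)))‖ ^ p
          ≤ 2 * ‖y + ∑ k ∈ Icc 1 m, T (d k ((j:ℝ) / 2 ^ m))‖ ^ p
            + c ^ p * (‖d (m+1) (((2*j : ℕ):ℝ) / 2 ^ (m+1))‖ ^ p
              + ‖d (m+1) (((2*j+1 : ℕ):ℝ) / 2 ^ (m+1))‖ ^ p) := by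
        intro j hj
        have hjlt : j < 2 ^ m := Finset.mem_range.mp hj
        set t0 : ℝ := ((2*j : ℕ):ℝ) / 2 ^ (m+1) with ht0def
        set t1 : ℝ := ((2*j+1 : ℕ):ℝ) / 2 ^ (m+1) with ht1def
        set tm : ℝ := (j:ℝ) / 2 ^ m with htmdef
        have h2j1 : 2*j+1 < 2 ^ (m+1) := by omega
        have hjR : (j:ℝ) < 2 ^ m := by exact_mod_cast hjlt
        have ht0tm : t0 = tm := by
          rw [ht0def, htmdef, h2powR]; push_cast; field_simp
        have ht1mem : t1 ∈ Set.Ico (0:ℝ) 1 := by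
          constructor
          · positivity
          · rw [ht1def, div_lt_one hpow1]; exact_mod_cast h2j1
        have htmmem : tm ∈ Set.Ico (0:ℝ) 1 := by
          constructor
          · positivity
          · rw [htmdef, div_lt_one hpow]; exact hjR
        have hfloor : ⌊t1 * 2 ^ m⌋ = ⌊tm * 2 ^ m⌋ := by
          have e1 : t1 * 2 ^ m = (j:ℝ) + 1/2 := by
            rw [ht1def, h2powR]; push_cast; field_simp
          have e2 : tm * 2 ^ m = (j:ℝ) := by
            rw [htmdef]; field_simp
          rw [e1, e2]
          have f1 : ⌊(j:ℝ) + 1/2⌋ = (j:ℤ) := by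
            rw [Int.floor_eq_iff]
            constructor <;> push_cast <;> norm_num
          rw [f1, Int.floor_natCast]
        have hF1 : (∑ k ∈ Icc 1 m, T (d k t1)) = ∑ k ∈ Icc 1 m, T (d k tm) :=
          hFeq t1 tm ht1mem htmmem hfloor
        have hsign : d (m+1) t0 = - d (m+1) t1 := by
          have := hdd.2 j h2j1
          have e0 : ((2*j : ℕ):ℝ) = (2 * j : ℝ) := by push_cast; ring
          have e1 : ((2*j+1 : ℕ):ℝ) = (2 * j + 1 : ℝ) := by push_cast; ring
          rw [ht0def, ht1def, e0, e1]
          exact this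
        set u : Y := y + ∑ k ∈ Icc 1 m, T (d k tm) with hu
        set v : X := d (m+1) t1 with hv
        have hterm0 : (y + ∑ k ∈ Icc 1 (m+1), T (d k t0)) = u - T v := by
          rw [Finset.sum_Icc_succ_top (by omega : 1 ≤ m+1), hsign, ht0tm, map_neg, hu]
          abel
        have hterm1 : (y + ∑ k ∈ Icc 1 (m+1), T (d k t1)) = u + T v := by
          rw [Finset.sum_Icc_succ_top (by omega : 1 ≤ m+1), hF1, hu, hv]
          abel
        have hnv : ‖d (m+1) t0‖ = ‖v‖ := by rw [hsign, norm_neg]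
        have hsmooth := smooth_pair hp1 hc hT u v
        rw [hterm0, hterm1, hnv]
        linarith
      -- assemble
      have hdpair : ∀ j ∈ range (2 ^ m), (0:ℝ) ≤
          ‖d (m+1) (((2*j : ℕ):ℝ) / 2 ^ (m+1))‖ ^ p
            + ‖d (m+1) (((2*j+1 : ℕ):ℝ) / 2 ^ (m+1))‖ ^ p := by
        intro j _
        have := Real.rpow_nonneg (norm_nonneg (d (m+1) (((2*j : ℕ):ℝ) / 2 ^ (m+1)))) p
        have := Real.rpow_nonneg (norm_nonneg (d (m+1) (((2*j+1 : ℕ):ℝ) / 2 ^ (m+1)))) p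
        linarith
      rw [hI1, h2powN, sum_range_two_mul']
      have hsumle : (∑ j ∈ range (2 ^ m),
            (‖y + ∑ k ∈ Icc 1 (m+1), T (d k (((2*j : ℕ):ℝ) / 2 ^ (m+1)))‖ ^ p
              + ‖y + ∑ k ∈ Icc 1 (m+1), T (d k (((2*j+1 : ℕ):ℝ) / 2 ^ (m+1)))‖ ^ p))
          ≤ ∑ j ∈ range (2 ^ m),
            (2 * ‖y + ∑ k ∈ Icc 1 m, T (d k ((j:ℝ) / 2 ^ m))‖ ^ p
              + c ^ p * (‖d (m+1) (((2*j : ℕ):ℝ) / 2 ^ (m+1))‖ ^ p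
                + ‖d (m+1) (((2*j+1 : ℕ):ℝ) / 2 ^ (m+1))‖ ^ p)) :=
        Finset.sum_le_sum hpair
      have hsplitsum : (∑ j ∈ range (2 ^ m),
            (2 * ‖y + ∑ k ∈ Icc 1 m, T (d k ((j:ℝ) / 2 ^ m))‖ ^ p
              + c ^ p * (‖d (m+1) (((2*j : ℕ):ℝ) / 2 ^ (m+1))‖ ^ p
                + ‖d (m+1) (((2*j+1 : ℕ):ℝ) / 2 ^ (m+1))‖ ^ p)))
          = 2 * (∑ j ∈ range (2 ^ m), ‖y + ∑ k ∈ Icc 1 m, T (d k ((j:ℝ) / 2 ^ m))‖ ^ p)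
            + c ^ p * (∑ j ∈ range (2 ^ m),
              (‖d (m+1) (((2*j : ℕ):ℝ) / 2 ^ (m+1))‖ ^ p
                + ‖d (m+1) (((2*j+1 : ℕ):ℝ) / 2 ^ (m+1))‖ ^ p)) := by
        rw [Finset.sum_add_distrib, ← Finset.mul_sum, ← Finset.mul_sum]
      have hIdsum : (∫ t in (0:ℝ)..1, ‖d (m+1) t‖ ^ p)
          = (∑ j ∈ range (2 ^ m),
              (‖d (m+1) (((2*j : ℕ):ℝ) / 2 ^ (m+1))‖ ^ p
                + ‖d (m+1) (((2*j+1 : ℕ):ℝ) / 2 ^ (m+1))‖ ^ p)) / 2 ^ (m+1) := by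
        rw [hId, h2powN, sum_range_two_mul']
      set A : ℝ := ∑ j ∈ range (2 ^ m), ‖y + ∑ k ∈ Icc 1 m, T (d k ((j:ℝ) / 2 ^ m))‖ ^ p with hA
      set B : ℝ := ∑ j ∈ range (2 ^ m),
        (‖d (m+1) (((2*j : ℕ):ℝ) / 2 ^ (m+1))‖ ^ p
          + ‖d (m+1) (((2*j+1 : ℕ):ℝ) / 2 ^ (m+1))‖ ^ p) with hB
      have hstep : (∑ j ∈ range (2 ^ m),
            (‖y + ∑ k ∈ Icc 1 (m+1), T (d k (((2*j : ℕ):ℝ) / 2 ^ (m+1)))‖ ^ p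
              + ‖y + ∑ k ∈ Icc 1 (m+1), T (d k (((2*j+1 : ℕ):ℝ) / 2 ^ (m+1)))‖ ^ p))
            / 2 ^ (m+1)
          ≤ (2 * A + c ^ p * B) / 2 ^ (m+1) := by
        gcongr
        exact le_of_le_of_eq hsumle hsplitsum
      have hfrac : (2 * A + c ^ p * B) / 2 ^ (m+1) = A / 2 ^ m + c ^ p * (B / 2 ^ (m+1)) := by
        rw [h2powR]; field_simp
      have hIm : A / 2 ^ m = ∫ t in (0:ℝ)..1, ‖y + ∑ k ∈ Icc 1 m, T (d k t)‖ ^ p := hI0.symm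
      have hIdval : B / 2 ^ (m+1) = ∫ t in (0:ℝ)..1, ‖d (m+1) t‖ ^ p := hIdsum.symm
      have hIdnn : (0:ℝ) ≤ ∫ t in (0:ℝ)..1, ‖d (m+1) t‖ ^ p := hIntX_nonneg _
      have hIcc : (∑ k ∈ Icc 1 (m+1), ∫ t in (0:ℝ)..1, ‖d k t‖ ^ p)
          = (∑ k ∈ Icc 1 m, ∫ t in (0:ℝ)..1, ‖d k t‖ ^ p)
            + ∫ t in (0:ℝ)..1, ‖d (m+1) t‖ ^ p :=
        Finset.sum_Icc_succ_top (by omega) _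
      calc _ ≤ (2 * A + c ^ p * B) / 2 ^ (m+1) := hstep
        _ = A / 2 ^ m + c ^ p * (B / 2 ^ (m+1)) := hfrac
        _ = (∫ t in (0:ℝ)..1, ‖y + ∑ k ∈ Icc 1 m, T (d k t)‖ ^ p)
            + c ^ p * ∫ t in (0:ℝ)..1, ‖d (m+1) t‖ ^ p := by rw [hIm, hIdval]
        _ ≤ ‖y‖ ^ p + c ^ p * ∑ k ∈ Icc 1 (m+1), ∫ t in (0:ℝ)..1, ‖d k t‖ ^ p := by
            rw [hIcc, mul_add]
            linarith
  -- conclude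
  have hfin := key n hd
  have hLq : ∀ k ∈ Icc 1 n, LqNorm p (d k) ^ p = ∫ t in (0:ℝ)..1, ‖d k t‖ ^ p := by
    intro k _
    unfold LqNorm
    rw [← Real.rpow_mul (hIntX_nonneg (d k)), one_div_mul_cancel (ne_of_gt hp0), Real.rpow_one]
  have hrw : (∑ k ∈ Icc 1 n, LqNorm p (d k) ^ p)
      = ∑ k ∈ Icc 1 n, ∫ t in (0:ℝ)..1, ‖d k t‖ ^ p := Finset.sum_congr rfl hLq
  calc LqNorm p (fun t => y + ∑ k ∈ Icc 1 n, T (d k t))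
      = (∫ t in (0:ℝ)..1, ‖y + ∑ k ∈ Icc 1 n, T (d k t)‖ ^ p) ^ (1/p) := rfl
    _ ≤ (‖y‖ ^ p + c ^ p * ∑ k ∈ Icc 1 n, ∫ t in (0:ℝ)..1, ‖d k t‖ ^ p) ^ (1/p) :=
        Real.rpow_le_rpow (hInt_nonneg _) hfin (by positivity)
    _ = (‖y‖ ^ p + c ^ p * ∑ k ∈ Icc 1 n, LqNorm p (d k) ^ p) ^ (1/p) := by rw [hrw]
end

section
/- Let 1 < p ≤ 2 with dual index p' = p/(p−1), and let T : X → Y be a bounded linear operator between Banach spaces. If the dual operator T' : Y' → X' has strong martingale cotype p' with constant c, then T has strong martingale type p with the same constant c. -/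
open MeasureTheory Finset

lemma step_integral (N : ℕ) (hN : 0 < N) (G : ℕ → ℝ) (g : ℝ → ℝ)
    (hg : ∀ t, t ∈ Set.Ico (0:ℝ) 1 → g t = G ⌊t * N⌋₊) :
    ∫ t in (0:ℝ)..1, g t = (∑ i ∈ range N, G i) / N := by
  have hNR : (0:ℝ) < N := by exact_mod_cast hN
  set a : ℕ → ℝ := fun i => i / N with ha
  have ha' : ∀ i : ℕ, a i = (i:ℝ)/N := fun i => rfl
  have hle : ∀ i : ℕ, a i ≤ a (i+1) := by
    intro i
    rw [ha' i, ha' (i+1)]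
    gcongr
    exact_mod_cast Nat.le_succ i
  have key : ∀ i, i < N → ∀ᵐ t : ℝ, t ∈ Set.uIoc (a i) (a (i+1)) → g t = G i := by
    intro i hi
    have h1 : ∀ᵐ t : ℝ, t ≠ a (i+1) := by
      rw [MeasureTheory.ae_iff]
      have : {t : ℝ | ¬ t ≠ a (i+1)} = {a (i+1)} := by ext t; simp
      rw [this]
      exact Real.volume_singleton
    filter_upwards [h1] with t ht htmem
    rw [Set.uIoc_of_le (hle i)] at htmem
    have ht2 : t < a (i+1) := lt_of_le_of_ne htmem.2 ht
    have ht1 : a i < t := htmem.1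
    have h0t : 0 ≤ t := le_trans (by positivity) ht1.le
    rw [ha'] at ht1 ht2
    push_cast at ht2
    have hub : t * N < (i:ℝ) + 1 := by
      have := (lt_div_iff₀ hNR).1 ht2; linarith
    have hlb : (i:ℝ) ≤ t * N := by
      have := (div_lt_iff₀ hNR).1 ht1; linarith
    have htlt1 : t < 1 := by
      have hi' : (i:ℝ)+1 ≤ N := by exact_mod_cast Nat.succ_le_of_lt hi
      nlinarith
    rw [hg t ⟨h0t, htlt1⟩]
    congr 1
    exact (Nat.floor_eq_iff (by positivity : (0:ℝ) ≤ t * N)).2 ⟨hlb, hub⟩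
  have hint : ∀ i, i < N → IntervalIntegrable g MeasureTheory.volume (a i) (a (i+1)) := by
    intro i hi
    rw [intervalIntegrable_iff]
    have hmeas : MeasurableSet (Set.uIoc (a i) (a (i+1))) := measurableSet_uIoc
    have heq : g =ᵐ[MeasureTheory.volume.restrict (Set.uIoc (a i) (a (i+1)))] fun _ => G i := by
      rw [Filter.EventuallyEq]
      rw [MeasureTheory.ae_restrict_iff' hmeas]
      exact key i hi
    refine (MeasureTheory.integrableOn_const ?_).congr heq.symm
    rw [Set.uIoc_of_le (hle i)]
    exact measure_Ioc_lt_top.ne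
  have hval : ∀ i, i < N → ∫ t in (a i)..(a (i+1)), g t = G i / N := by
    intro i hi
    rw [intervalIntegral.integral_congr_ae (key i hi), intervalIntegral.integral_const]
    rw [ha' i, ha' (i+1)]
    push_cast
    rw [smul_eq_mul]
    field_simp
    ring
  have hsum := intervalIntegral.sum_integral_adjacent_intervals (f := g)
    (μ := MeasureTheory.volume) (a := a) (n := N) (fun k hk => hint k hk)
  have ha0 : a 0 = 0 := by simp [ha']
  have haN : a N = 1 := by rw [ha']; field_simp
  rw [ha0, haN] at hsum
  rw [← hsum, Finset.sum_congr rfl (fun i hi => hval i (mem_range.1 hi)), Finset.sum_div]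


lemma natFloor_level (n k : ℕ) (hk : k ≤ n) (t : ℝ) :
    ⌊t * 2^k⌋₊ = ⌊t * 2^n⌋₊ / 2^(n-k) := by
  have h2 : (2:ℝ)^n = 2^k * 2^(n-k) := by rw [← pow_add]; congr 1; omega
  have h3 : t * 2^k = (t * 2^n) / ((2^(n-k) : ℕ) : ℝ) := by
    push_cast; rw [h2]; field_simp
  rw [h3, Nat.floor_div_natCast]

lemma natFloor_div_mul (N i : ℕ) (hN : 0 < N) : ⌊((i:ℝ)/N) * N⌋₊ = i := by
  have hNR : (N:ℝ) ≠ 0 := by exact_mod_cast hN.ne'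
  have h : ((i:ℝ)/N) * N = i := by field_simp
  rw [h, Nat.floor_natCast]

lemma intFloor_of_natFloor {x y : ℝ} (hx : 0 ≤ x) (hy : 0 ≤ y) (h : ⌊x⌋₊ = ⌊y⌋₊) :
    ⌊x⌋ = ⌊y⌋ := by
  rw [← Int.natCast_floor_eq_floor hx, ← Int.natCast_floor_eq_floor hy, h]

lemma natFloor_of_intFloor {x y : ℝ} (h : ⌊x⌋ = ⌊y⌋) : ⌊x⌋₊ = ⌊y⌋₊ := by
  rw [← Int.floor_toNat, ← Int.floor_toNat, h]

lemma dyadicMeas_step {E : Type*} (n k : ℕ) (hk : k ≤ n) (f : ℝ → E) (hf : DyadicMeas k f)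
    (t : ℝ) (ht : t ∈ Set.Ico (0:ℝ) 1) :
    f t = f ((⌊t * 2^n⌋₊ : ℝ) / 2^n) := by
  have h2n : (0:ℝ) < 2^n := by positivity
  have h0t : (0:ℝ) ≤ t * 2^n := by nlinarith [ht.1]
  set i := ⌊t * 2^n⌋₊ with hi
  have hiN : i < 2^n := by
    rw [hi, Nat.floor_lt h0t]
    calc t * 2^n < 1 * 2^n := by nlinarith [ht.2]
    _ = _ := by push_cast; ring
  have hu : ((i:ℝ)/2^n) ∈ Set.Ico (0:ℝ) 1 := by
    constructor
    · positivity
    · rw [div_lt_one h2n]; exact_mod_cast hiN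
  apply hf t _ ht hu
  apply intFloor_of_natFloor (mul_nonneg ht.1 (by positivity)) (by positivity)
  rw [natFloor_level n k hk t, natFloor_level n k hk _]
  congr 1
  rw [← hi]
  have := natFloor_div_mul (2^n) i (by positivity)
  push_cast at this ⊢
  exact this.symm

lemma dyadicMeas_step' {E : Type*} (n l : ℕ) (hl : l ≤ n) (f : ℝ → E) (hf : DyadicMeas l f)
    (i : ℕ) (hi : i < 2^n) :
    f ((i:ℝ)/2^n) = f (((i / 2^(n-l) : ℕ) : ℝ)/2^l) := by
  have h2n : (0:ℝ) < 2^n := by positivity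
  have h2l : (0:ℝ) < 2^l := by positivity
  set m := i / 2^(n-l) with hm
  have hml : m < 2^l := by
    rw [hm, Nat.div_lt_iff_lt_mul (by positivity)]
    calc i < 2^n := hi
    _ = 2^l * 2^(n-l) := by rw [← pow_add]; congr 1; omega
  have hu : ((i:ℝ)/2^n) ∈ Set.Ico (0:ℝ) 1 := by
    refine ⟨by positivity, by rw [div_lt_one h2n]; exact_mod_cast hi⟩
  have hv : ((m:ℝ)/2^l) ∈ Set.Ico (0:ℝ) 1 := by
    refine ⟨by positivity, by rw [div_lt_one h2l]; exact_mod_cast hml⟩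
  apply hf _ _ hu hv
  apply intFloor_of_natFloor (by positivity) (by positivity)
  have e1 : ⌊((i:ℝ)/2^n) * 2^l⌋₊ = m := by
    have h1 : ((i:ℝ)/2^n) * 2^l = ((i:ℝ)/(2^(n-l):ℕ)) := by
      push_cast
      have : (2:ℝ)^n = 2^l * 2^(n-l) := by rw [← pow_add]; congr 1; omega
      rw [this]; field_simp
    rw [h1, Nat.floor_div_natCast, Nat.floor_natCast]
  have e2 : ⌊((m:ℝ)/2^l) * 2^l⌋₊ = m := by
    have := natFloor_div_mul (2^l) m (by positivity)
    push_cast at this ⊢; exact this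
  rw [e1, e2]

noncomputable def dyAvg {Z : Type*} [AddCommGroup Z] [Module ℝ Z] (L : ℕ) (w : ℕ → Z) (m : ℕ) : Z :=
  (L:ℝ)⁻¹ • ∑ j ∈ range L, w (m * L + j)

lemma dyAvg_one {Z : Type*} [AddCommGroup Z] [Module ℝ Z] (w : ℕ → Z) (m : ℕ) :
    dyAvg 1 w m = w m := by simp [dyAvg]

lemma dyAvg_block_sum {Z : Type*} [AddCommGroup Z] [Module ℝ Z] (L : ℕ) (hL : 0 < L)
    (w : ℕ → Z) (m : ℕ) : (L:ℝ) • dyAvg L w m = ∑ j ∈ range L, w (m * L + j) := by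
  rw [dyAvg, smul_smul, mul_inv_cancel₀ (by exact_mod_cast hL.ne'), one_smul]

lemma sum_range_mul_blocks {Z : Type*} [AddCommMonoid Z] (B M : ℕ) (f : ℕ → Z) :
    ∑ i ∈ range (B * M), f i = ∑ b ∈ range B, ∑ r ∈ range M, f (b * M + r) := by
  induction B with
  | zero => simp
  | succ B ih =>
    rw [Nat.succ_mul, Finset.sum_range_add, ih, Finset.sum_range_succ]

lemma dyAvg_halve {Z : Type*} [AddCommGroup Z] [Module ℝ Z] (L : ℕ) (hL : 0 < L)
    (w : ℕ → Z) (m : ℕ) :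
    dyAvg (2*L) w m = (2:ℝ)⁻¹ • (dyAvg L w (2*m) + dyAvg L w (2*m+1)) := by
  have hsplit : ∑ j ∈ range (2*L), w (m * (2*L) + j)
      = (∑ j ∈ range L, w ((2*m) * L + j)) + ∑ j ∈ range L, w ((2*m+1) * L + j) := by
    rw [two_mul L, Finset.sum_range_add]
    congr 1
    · apply Finset.sum_congr rfl; intro j _; congr 1; ring
    · apply Finset.sum_congr rfl; intro j _; congr 1; ring
  rw [dyAvg, hsplit, ← dyAvg_block_sum L hL w (2*m), ← dyAvg_block_sum L hL w (2*m+1)]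
  rw [smul_add, smul_smul, smul_smul, smul_add]
  have hLne : (L:ℝ) ≠ 0 := by exact_mod_cast hL.ne'
  congr 1 <;> · congr 1; push_cast; field_simp

lemma LqNorm_step {E : Type*} [NormedAddCommGroup E] (N : ℕ) (hN : 0 < N) (r : ℝ)
    (F : ℕ → E) (f : ℝ → E) (hf : ∀ t, t ∈ Set.Ico (0:ℝ) 1 → f t = F ⌊t * N⌋₊) :
    LqNorm r f = ((∑ i ∈ range N, ‖F i‖ ^ r) / N) ^ (1/r) := by
  unfold LqNorm
  rw [step_integral N hN (fun i => ‖F i‖ ^ r) _ (fun t ht => by rw [hf t ht])]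

lemma block_div (M b r : ℕ) (hM : 0 < M) (hr : r < M) : (b * M + r)/M = b := by
  rw [mul_comm, Nat.mul_add_div hM, Nat.div_eq_of_lt hr, add_zero]

lemma range_succ_insert (n : ℕ) : Finset.range (n+1) = insert 0 (Finset.Icc 1 n) := by
  ext j; simp [Nat.lt_succ_iff]; omega

lemma diff_block_sum_zero {X : Type*} [NormedAddCommGroup X] (n l : ℕ) (hl1 : 1 ≤ l)
    (hln : l ≤ n) (dl : ℝ → X) (hd : IsDyadicDiff l dl) (b : ℕ) (hb : b < 2^(l-1)) :
    ∑ r ∈ range (2^(n-l+1)), dl ((((b * 2^(n-l+1) + r) : ℕ) : ℝ)/2^n) = 0 := by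
  set M' := 2^(n-l) with hM'
  have hM'pos : 0 < M' := by positivity
  have h2 : 2^(n-l+1) = M' + M' := by rw [pow_succ, hM']; ring
  have hb' : 2*b+1 < 2^l := by
    have : 2*2^(l-1) = 2^l := by rw [← pow_succ']; congr 1; omega
    omega
  have hlt : ∀ r, r < M' + M' → b * 2^(n-l+1) + r < 2^n := by
    intro r hr
    have hpow : 2^(l-1) * 2^(n-l+1) = 2^n := by rw [← pow_add]; congr 1; omega
    calc b * 2^(n-l+1) + r < b * 2^(n-l+1) + 2^(n-l+1) := by omega
    _ = (b+1) * 2^(n-l+1) := by ring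
    _ ≤ 2^(l-1) * 2^(n-l+1) := Nat.mul_le_mul_right _ (by omega)
    _ = 2^n := hpow
  rw [h2, Finset.sum_range_add]
  have e1 : ∀ r ∈ range M', dl ((((b * (M'+M') + r) : ℕ) : ℝ)/2^n)
      = dl ((((2*b : ℕ)):ℝ)/2^l) := by
    intro r hr
    rw [dyadicMeas_step' n l hln dl hd.1 _ (h2 ▸ hlt r (by simp at hr; omega))]
    congr 2
    rw [← hM']
    have : b * (M'+M') + r = (2*b) * M' + r := by ring
    rw [this, block_div M' (2*b) r hM'pos (by simpa using hr)]
  have e2 : ∀ r ∈ range M', dl ((((b * (M'+M') + (M' + r)) : ℕ) : ℝ)/2^n)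
      = dl ((((2*b+1 : ℕ)):ℝ)/2^l) := by
    intro r hr
    rw [dyadicMeas_step' n l hln dl hd.1 _ (h2 ▸ hlt (M'+r) (by simp at hr; omega))]
    congr 2
    rw [← hM']
    have : b * (M'+M') + (M' + r) = (2*b+1) * M' + r := by ring
    rw [this, block_div M' (2*b+1) r hM'pos (by simpa using hr)]
  rw [Finset.sum_congr rfl e1, Finset.sum_congr rfl e2, Finset.sum_const, Finset.sum_const,
    card_range]
  have hsign := hd.2 b hb'
  have hcast : ((2*b : ℕ) : ℝ) = 2 * (b:ℝ) := by push_cast; ring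
  have hcast2 : ((2*b+1 : ℕ) : ℝ) = 2 * (b:ℝ) + 1 := by push_cast; ring
  rw [hcast, hcast2, hsign, smul_neg]
  simp

lemma W_block_sum_zero {Z : Type*} [AddCommGroup Z] [Module ℝ Z] (n k : ℕ) (hk1 : 1 ≤ k)
    (hkn : k ≤ n) (w : ℕ → Z) (b : ℕ) :
    ∑ r ∈ range (2^(n-k+1)), (dyAvg (2^(n-k)) w ((b * 2^(n-k+1) + r) / 2^(n-k))
      - dyAvg (2^(n-k+1)) w ((b * 2^(n-k+1) + r) / 2^(n-k+1))) = 0 := by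
  set M' := 2^(n-k) with hM'
  have hM'pos : 0 < M' := by positivity
  have h2 : 2^(n-k+1) = M' + M' := by rw [pow_succ, hM']; ring
  have h2' : 2^(n-k+1) = 2 * M' := by omega
  have e1 : ∀ r ∈ range M', dyAvg M' w ((b * (M'+M') + r) / M') = dyAvg M' w (2*b) := by
    intro r hr
    have h : b * (M'+M') + r = (2*b) * M' + r := by ring
    rw [h, block_div M' (2*b) r hM'pos (by simpa using hr)]
  have e1' : ∀ r ∈ range M', dyAvg M' w ((b * (M'+M') + (M'+r)) / M') = dyAvg M' w (2*b+1) := by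
    intro r hr
    have h : b * (M'+M') + (M'+r) = (2*b+1) * M' + r := by ring
    rw [h, block_div M' (2*b+1) r hM'pos (by simpa using hr)]
  have e2 : ∀ r ∈ range (2^(n-k+1)), dyAvg (2^(n-k+1)) w ((b * 2^(n-k+1) + r) / 2^(n-k+1))
      = dyAvg (2^(n-k+1)) w b := by
    intro r hr
    rw [block_div _ b r (by positivity) (by simpa using hr)]
  have hsub : ∑ r ∈ range (2^(n-k+1)), (dyAvg M' w ((b * 2^(n-k+1) + r) / M')
      - dyAvg (2^(n-k+1)) w ((b * 2^(n-k+1) + r) / 2^(n-k+1)))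
      = (∑ r ∈ range (2^(n-k+1)), dyAvg M' w ((b * 2^(n-k+1) + r) / M'))
      - ∑ r ∈ range (2^(n-k+1)), dyAvg (2^(n-k+1)) w ((b * 2^(n-k+1) + r) / 2^(n-k+1)) :=
    Finset.sum_sub_distrib _ _
  have hfirst : ∑ r ∈ range (2^(n-k+1)), dyAvg M' w ((b * 2^(n-k+1) + r) / M')
      = (M' • dyAvg M' w (2*b)) + (M' • dyAvg M' w (2*b+1)) := by
    rw [h2, Finset.sum_range_add, Finset.sum_congr rfl e1, Finset.sum_congr rfl e1',
      Finset.sum_const, Finset.sum_const, card_range]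
  have hsecond : ∑ r ∈ range (2^(n-k+1)), dyAvg (2^(n-k+1)) w ((b * 2^(n-k+1) + r) / 2^(n-k+1))
      = (2^(n-k+1)) • dyAvg (2^(n-k+1)) w b := by
    rw [Finset.sum_congr rfl e2, Finset.sum_const, card_range]
  rw [hsub, hfirst, hsecond, h2', dyAvg_halve M' hM'pos w b]
  rw [← Nat.cast_smul_eq_nsmul ℝ, ← Nat.cast_smul_eq_nsmul ℝ, ← Nat.cast_smul_eq_nsmul ℝ]
  match_scalars <;> push_cast <;> ring


lemma LqNorm_nonneg {E : Type*} [NormedAddCommGroup E] (r : ℝ) (f : ℝ → E) :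
    0 ≤ LqNorm r f :=
  Real.rpow_nonneg (intervalIntegral.integral_nonneg zero_le_one
    (fun u _ => Real.rpow_nonneg (norm_nonneg _) r)) _

set_option maxHeartbeats 4000000 in
theorem stmt_7 {X Y : Type*} [NormedAddCommGroup X] [NormedSpace ℝ X] [CompleteSpace X]
    [NormedAddCommGroup Y] [NormedSpace ℝ Y] [CompleteSpace Y]
    (p c : ℝ) (hp1 : 1 < p) (hp2 : p ≤ 2) (hc : 0 < c) (T : X →L[ℝ] Y)
    (T' : StrongDual ℝ Y →L[ℝ] StrongDual ℝ X)
    (hT' : ∀ (e : StrongDual ℝ Y) (x : X), T' e x = e (T x))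
    (hcot : StrongMartCotype T' (p / (p - 1)) c) :
    StrongMartType T p c := by
  intro n d hd y
  have hpq : p.HolderConjugate (p/(p-1)) := Real.HolderConjugate.conjExponent hp1
  set q : ℝ := p / (p-1) with hqdef
  have hq1 : 1 < q := (Real.HolderConjugate.symm hpq).lt
  have hq0 : 0 < q := hpq.symm.pos
  have hp0 : 0 < p := hpq.pos
  set N : ℕ := 2^n with hNdef
  have hN : 0 < N := by positivity
  have hNc : ((N:ℕ):ℝ) = (2:ℝ)^n := by rw [hNdef]; push_cast; ring
  have hNR : (0:ℝ) < (N:ℝ) := by exact_mod_cast hN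
  set D : ℕ → ℕ → X := fun k i => d k ((i:ℝ)/N) with hDdef
  set v : ℕ → Y := fun i => y + ∑ k ∈ Finset.Icc 1 n, T (D k i) with hvdef
  set S : ℝ := ∑ i ∈ range N, ‖v i‖ ^ p with hSdef
  have hS0 : 0 ≤ S := Finset.sum_nonneg fun i _ => Real.rpow_nonneg (norm_nonneg _) p
  -- step representations of the d k
  have hstep_d : ∀ k, 1 ≤ k → k ≤ n → ∀ t ∈ Set.Ico (0:ℝ) 1, d k t = D k ⌊t * N⌋₊ := by
    intro k h1 h2 t ht
    have h := dyadicMeas_step n k h2 (d k) (hd k h1 h2).1 t ht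
    show d k t = d k ((⌊t * (N:ℝ)⌋₊ : ℝ)/(N:ℝ))
    rw [hNc]
    exact h
  -- LHS computation
  have hLHS : LqNorm p (fun t => y + ∑ k ∈ Finset.Icc 1 n, T (d k t)) = (S / N)^(1/p) := by
    rw [hSdef]
    apply LqNorm_step N hN p v _
    intro t ht
    rw [hvdef]
    simp only []
    congr 1
    apply Finset.sum_congr rfl
    intro k hk
    rw [Finset.mem_Icc] at hk
    rw [hstep_d k hk.1 hk.2 t ht]
  -- LqNorm of the d k
  have ha : ∀ k, 1 ≤ k → k ≤ n →
      LqNorm p (d k) = ((∑ i ∈ range N, ‖D k i‖^p)/N)^(1/p) := by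
    intro k h1 h2
    exact LqNorm_step N hN p (D k) (d k) (hstep_d k h1 h2)
  have ha0 : ∀ k, 0 ≤ LqNorm p (d k) := fun k => LqNorm_nonneg p (d k)
  set A : ℝ := ‖y‖ ^ p + c ^ p * ∑ k ∈ Finset.Icc 1 n, LqNorm p (d k) ^ p with hAdef
  have hA0 : 0 ≤ A := by
    apply add_nonneg (Real.rpow_nonneg (norm_nonneg _) p)
    apply mul_nonneg (Real.rpow_nonneg hc.le p)
    exact Finset.sum_nonneg fun k _ => Real.rpow_nonneg (ha0 k) p
  rw [hLHS]
  rcases eq_or_lt_of_le hS0 with hS | hS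
  · rw [← hS, zero_div, Real.zero_rpow (by positivity : (1:ℝ)/p ≠ 0)]
    exact Real.rpow_nonneg hA0 _
  -- main case : 0 < S
  have hdual := fun i => exists_dual_vector'' ℝ (v i)
  choose φ hφ1 hφ2 using hdual
  set w : ℕ → (StrongDual ℝ Y) := fun i => ‖v i‖^(p-1) • φ i with hwdef
  set x' : StrongDual ℝ Y := dyAvg N w 0 with hx'def
  set e : ℕ → ℝ → StrongDual ℝ Y := fun k t => dyAvg (2^(n-k)) w ⌊t * 2^k⌋₊ with hedef
  set D' : ℕ → ℝ → StrongDual ℝ Y :=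
    fun k => if k = 0 then (fun _ => x') else fun t => e k t - e (k-1) t with hD'def
  set Ek : ℕ → ℕ → StrongDual ℝ Y := fun k i => dyAvg (2^(n-k)) w (i / 2^(n-k)) with hEkdef
  set Wd : ℕ → ℕ → StrongDual ℝ Y :=
    fun k i => if k = 0 then x' else Ek k i - Ek (k-1) i with hWddef
  have hstep_e : ∀ k, k ≤ n → ∀ t : ℝ, e k t = Ek k ⌊t * (N:ℝ)⌋₊ := by
    intro k hk t
    simp only [hedef, hEkdef]
    rw [hNc, natFloor_level n k hk t]
  have hstep_D' : ∀ k, k ≤ n → ∀ t : ℝ, D' k t = Wd k ⌊t * (N:ℝ)⌋₊ := by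
    intro k hk t
    simp only [hD'def, hWddef]
    by_cases h0 : k = 0
    · rw [if_pos h0, if_pos h0]
    · rw [if_neg h0, if_neg h0, hstep_e k hk t, hstep_e (k-1) (by omega) t]
  have hdiffs : ∀ k, 1 ≤ k → k ≤ n → IsDyadicDiff k (D' k) := by
    intro k hk1 hkn
    constructor
    · intro s t hs ht hfl
      have hnat : ⌊s*2^k⌋₊ = ⌊t*2^k⌋₊ := natFloor_of_intFloor hfl
      have hnat' : ⌊s*2^(k-1)⌋₊ = ⌊t*2^(k-1)⌋₊ := by
        rw [natFloor_level k (k-1) (by omega) s, natFloor_level k (k-1) (by omega) t, hnat]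
      simp only [hD'def, if_neg (by omega : ¬ k = 0), hedef]
      rw [hnat, hnat']
    · intro j hj
      have hpow2 : (2:ℝ)^k = 2 * 2^(k-1) := by
        rw [← pow_succ']; congr 1; omega
      have h1 := natFloor_div_mul (2^k) (2*j) (by positivity)
      have h2 := natFloor_div_mul (2^k) (2*j+1) (by positivity)
      push_cast at h1 h2
      have h3 : ⌊(2*(j:ℝ)/2^k) * 2^(k-1)⌋₊ = j := by
        have hx : (2*(j:ℝ)/2^k)*2^(k-1) = (j:ℝ) := by
          rw [hpow2]; field_simp
        rw [hx, Nat.floor_natCast]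
      have h4 : ⌊((2*(j:ℝ)+1)/2^k) * 2^(k-1)⌋₊ = j := by
        have hx : ((2*(j:ℝ)+1)/2^k)*2^(k-1) = (j:ℝ) + 1/2 := by
          rw [hpow2]; field_simp
        rw [hx, Nat.floor_eq_iff (by positivity)]
        constructor
        · linarith
        · linarith
      simp only [hD'def, if_neg (by omega : ¬ k = 0), hedef]
      rw [h1, h2, h3, h4]
      have hsplit : 2^(n-(k-1)) = 2 * 2^(n-k) := by rw [← pow_succ']; congr 1; omega
      rw [hsplit, dyAvg_halve (2^(n-k)) (by positivity) w j]
      module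
  have Hcot := hcot n x' D' (by simp [hD'def]) hdiffs
  -- discrete telescoping
  have hWsum : ∀ i, i < N → ∑ k ∈ range (n+1), Wd k i = w i := by
    intro i hi
    rw [Finset.sum_range_succ']
    have hterm : ∀ k ∈ range n, Wd (k+1) i = Ek (k+1) i - Ek k i := by
      intro k hk
      simp only [hWddef, if_neg (Nat.succ_ne_zero k), Nat.add_sub_cancel]
    rw [Finset.sum_congr rfl hterm, Finset.sum_range_sub (fun k => Ek k i)]
    have hEn : Ek n i = w i := by
      simp only [hEkdef]
      rw [Nat.sub_self, pow_zero, Nat.div_one, dyAvg_one]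
    have hE0 : Ek 0 i = x' := by
      simp only [hEkdef, hx'def]
      rw [Nat.sub_zero, Nat.div_eq_of_lt (by rw [← hNdef]; exact hi), hNdef]
    have hW0 : Wd 0 i = x' := by simp only [hWddef, if_pos rfl]
    rw [hEn, hE0, hW0]
    abel
  -- step form of the martingale sum
  have hsum_step : ∀ t, t ∈ Set.Ico (0:ℝ) 1 →
      (∑ k ∈ range (n+1), D' k t) = w ⌊t * (N:ℝ)⌋₊ := by
    intro t ht
    have hfl : ⌊t * (N:ℝ)⌋₊ < N := by
      rw [Nat.floor_lt (mul_nonneg ht.1 hNR.le)]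
      calc t * (N:ℝ) < 1 * N := by nlinarith [ht.2, hNR]
      _ = N := one_mul _
    rw [Finset.sum_congr rfl (fun k hk => hstep_D' k (by simp at hk; omega) t),
      hWsum _ hfl]
  -- bound on the norms of w
  have hwb : ∀ i, ‖w i‖ ^ q ≤ ‖v i‖ ^ p := by
    intro i
    have h1 : ‖w i‖ ≤ ‖v i‖^(p-1) := by
      rw [hwdef]
      simp only []
      rw [norm_smul, Real.norm_eq_abs, abs_of_nonneg (Real.rpow_nonneg (norm_nonneg _) _)]
      exact mul_le_of_le_one_right (Real.rpow_nonneg (norm_nonneg _) _) (hφ1 i)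
    calc ‖w i‖^q ≤ (‖v i‖^(p-1))^q := Real.rpow_le_rpow (norm_nonneg _) h1 hq0.le
    _ = ‖v i‖^((p-1)*q) := by rw [← Real.rpow_mul (norm_nonneg _)]
    _ = ‖v i‖^p := by rw [hpq.sub_one_mul_conj]
  have hRHScot : LqNorm q (fun t => ∑ k ∈ range (n+1), D' k t) ≤ (S/N)^(1/q) := by
    rw [LqNorm_step N hN q w _ hsum_step]
    apply Real.rpow_le_rpow (by positivity) _ (by positivity)
    exact div_le_div_of_nonneg_right (Finset.sum_le_sum fun i _ => hwb i) hNR.le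
  have hvS : ∑ i ∈ range N, (w i) (v i) = S := by
    rw [hSdef]
    apply Finset.sum_congr rfl
    intro i _
    rw [hwdef]
    simp only [ContinuousLinearMap.smul_apply, smul_eq_mul]
    rw [hφ2 i]
    rcases eq_or_ne (v i) 0 with hv0 | hv0
    · rw [hv0]
      simp [Real.zero_rpow hp0.ne']
    · have h := Real.rpow_add (norm_pos_iff.2 hv0) (p-1) 1
      rw [Real.rpow_one, sub_add_cancel] at h
      exact h.symm
  have hZ1 : ∀ l, 1 ≤ l → l ≤ n → ∑ i ∈ range N, D l i = 0 := by
    intro l h1 h2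
    have hsplitN : N = 2^(l-1) * 2^(n-l+1) := by rw [hNdef, ← pow_add]; congr 1; omega
    rw [hsplitN, sum_range_mul_blocks]
    apply Finset.sum_eq_zero
    intro b hb
    have h0 := diff_block_sum_zero n l h1 h2 (d l) (hd l h1 h2) b (mem_range.1 hb)
    calc ∑ r ∈ range (2^(n-l+1)), D l (b * 2^(n-l+1) + r)
        = ∑ r ∈ range (2^(n-l+1)), d l ((((b * 2^(n-l+1) + r):ℕ):ℝ)/2^n) := by
          apply Finset.sum_congr rfl; intro r hr
          show d l ((((b * 2^(n-l+1) + r):ℕ):ℝ)/(N:ℝ)) = _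
          rw [hNc]
    _ = 0 := h0
  have hZ2 : ∀ k, 1 ≤ k → k ≤ n → ∀ u : ℕ → Y,
      (∀ b, b < 2^(k-1) → ∀ r, r < 2^(n-k+1) → u (b * 2^(n-k+1) + r) = u (b * 2^(n-k+1))) →
      ∑ i ∈ range N, (Wd k i) (u i) = 0 := by
    intro k h1 h2 u hu
    have hsplitN : N = 2^(k-1) * 2^(n-k+1) := by rw [hNdef, ← pow_add]; congr 1; omega
    rw [hsplitN, sum_range_mul_blocks]
    apply Finset.sum_eq_zero
    intro b hb
    have hW0 := W_block_sum_zero n k h1 h2 w b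
    have hexp : n-(k-1) = n-k+1 := by omega
    calc ∑ r ∈ range (2^(n-k+1)), (Wd k (b * 2^(n-k+1) + r)) (u (b * 2^(n-k+1) + r))
        = ∑ r ∈ range (2^(n-k+1)), (Wd k (b * 2^(n-k+1) + r)) (u (b * 2^(n-k+1))) := by
          apply Finset.sum_congr rfl; intro r hr
          rw [hu b (mem_range.1 hb) r (mem_range.1 hr)]
    _ = (∑ r ∈ range (2^(n-k+1)), Wd k (b * 2^(n-k+1) + r)) (u (b * 2^(n-k+1))) := by
          rw [ContinuousLinearMap.sum_apply]
    _ = 0 := by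
          have hz : ∑ r ∈ range (2^(n-k+1)), Wd k (b * 2^(n-k+1) + r) = 0 := by
            rw [← hW0]
            apply Finset.sum_congr rfl
            intro r hr
            show (if k = 0 then x' else Ek k _ - Ek (k-1) _) = _
            rw [if_neg (by omega : ¬ k = 0)]
            simp only [hEkdef]
            rw [hexp]
          rw [hz, ContinuousLinearMap.zero_apply]
  have hvsum : ∑ i ∈ range N, v i = N • y := by
    have hc1 : ∀ i ∈ range N, v i = y + ∑ l ∈ Finset.Icc 1 n, T (D l i) := fun i _ => rfl
    rw [Finset.sum_congr rfl hc1, Finset.sum_add_distrib, Finset.sum_const, card_range,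
      Finset.sum_comm]
    have hz : ∀ l ∈ Finset.Icc 1 n, ∑ i ∈ range N, T (D l i) = 0 := by
      intro l hl
      rw [Finset.mem_Icc] at hl
      rw [← map_sum, hZ1 l hl.1 hl.2, map_zero]
    rw [Finset.sum_congr rfl hz, Finset.sum_const, smul_zero, add_zero]
  have hpair : S = (N:ℝ) * (x' y) +
      ∑ k ∈ Finset.Icc 1 n, ∑ i ∈ range N, (T' (Wd k i)) (D k i) := by
    rw [← hvS]
    have h1 : ∀ i ∈ range N, (w i) (v i) = ∑ k ∈ range (n+1), (Wd k i) (v i) := by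
      intro i hi
      rw [← ContinuousLinearMap.sum_apply, hWsum i (mem_range.1 hi)]
    rw [Finset.sum_congr rfl h1, Finset.sum_comm, range_succ_insert,
      Finset.sum_insert (by simp)]
    congr 1
    · have hc0 : ∀ i ∈ range N, (Wd 0 i) (v i) = x' (v i) := by
        intro i _
        show (if (0:ℕ) = 0 then x' else _) (v i) = x' (v i)
        rw [if_pos rfl]
      rw [Finset.sum_congr rfl hc0, ← map_sum, hvsum, map_nsmul, nsmul_eq_mul]
    · apply Finset.sum_congr rfl
      intro k hk
      rw [Finset.mem_Icc] at hk
      have hv : ∀ i ∈ range N, (Wd k i) (v i)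
          = (Wd k i) y + ∑ l ∈ Finset.Icc 1 n, (Wd k i) (T (D l i)) := by
        intro i _
        rw [hvdef]
        simp only []
        rw [map_add, map_sum]
      rw [Finset.sum_congr rfl hv, Finset.sum_add_distrib]
      have hy0 : ∑ i ∈ range N, (Wd k i) y = 0 :=
        hZ2 k hk.1 hk.2 (fun _ => y) (fun _ _ _ _ => rfl)
      rw [hy0, zero_add, Finset.sum_comm]
      rw [Finset.sum_eq_single_of_mem k (Finset.mem_Icc.2 hk)]
      · apply Finset.sum_congr rfl
        intro i _
        rw [hT']
      · intro l hl hlk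
        rw [Finset.mem_Icc] at hl
        rcases lt_or_gt_of_ne hlk with hlt | hgt
        · apply hZ2 k hk.1 hk.2 (fun i => T (D l i))
          intro b hb r hr
          have hpow : 2^(k-1) * 2^(n-k+1) = N := by rw [hNdef, ← pow_add]; congr 1; omega
          have hh1 : (b+1) * 2^(n-k+1) ≤ N := by
            rw [← hpow]; exact Nat.mul_le_mul_right _ (by omega)
          have hb1 : b * 2^(n-k+1) + r < N := by
            calc b * 2^(n-k+1) + r < b * 2^(n-k+1) + 2^(n-k+1) := by omega
            _ = (b+1) * 2^(n-k+1) := by ring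
            _ ≤ N := hh1
          have hb2 : b * 2^(n-k+1) < N := by
            have : (0:ℕ) < 2^(n-k+1) := by positivity
            omega
          have hlow : ∀ (i : ℕ), i < N → D l i = d l ((((i / 2^(n-l) : ℕ)):ℝ)/2^l) := by
            intro i hi
            show d l ((i:ℝ)/(N:ℝ)) = _
            rw [hNc]
            exact dyadicMeas_step' n l hl.2 (d l) (hd l hl.1 hl.2).1 i
              (by rw [hNdef] at hi; exact hi)
          have hh2 : 2^(n-l) = 2^(n-k+1) * 2^(k-1-l) := by rw [← pow_add]; congr 1; omega
          have hql : (b * 2^(n-k+1) + r) / 2^(n-l) = b / 2^(k-1-l) := by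
            rw [hh2, ← Nat.div_div_eq_div_mul, block_div _ b r (by positivity) hr]
          have hql' : (b * 2^(n-k+1)) / 2^(n-l) = b / 2^(k-1-l) := by
            rw [hh2, ← Nat.div_div_eq_div_mul, Nat.mul_div_cancel _ (by positivity)]
          show T (D l _) = T (D l _)
          congr 1
          rw [hlow _ hb1, hlow _ hb2, hql, hql']
        · have hsplitN : N = 2^(l-1) * 2^(n-l+1) := by rw [hNdef, ← pow_add]; congr 1; omega
          rw [hsplitN, sum_range_mul_blocks]
          apply Finset.sum_eq_zero
          intro b hb
          set M : ℕ := 2^(n-l+1) with hMdef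
          have hWc : ∀ r, r < M → Wd k (b * M + r) = Wd k (b * M) := by
            intro r hr
            show (if k = 0 then x' else Ek k _ - Ek (k-1) _)
              = (if k = 0 then x' else Ek k _ - Ek (k-1) _)
            rw [if_neg (by omega : ¬ k = 0), if_neg (by omega : ¬ k = 0)]
            have h2a : 2^(n-k) = M * 2^(l-1-k) := by rw [hMdef, ← pow_add]; congr 1; omega
            have h2b : 2^(n-(k-1)) = M * 2^(l-k) := by rw [hMdef, ← pow_add]; congr 1; omega
            have hq1 : (b * M + r) / 2^(n-k) = (b * M) / 2^(n-k) := by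
              rw [h2a, ← Nat.div_div_eq_div_mul, ← Nat.div_div_eq_div_mul,
                block_div M b r (by positivity) hr, Nat.mul_div_cancel _ (by positivity)]
            have hq2 : (b * M + r) / 2^(n-(k-1)) = (b * M) / 2^(n-(k-1)) := by
              rw [h2b, ← Nat.div_div_eq_div_mul, ← Nat.div_div_eq_div_mul,
                block_div M b r (by positivity) hr, Nat.mul_div_cancel _ (by positivity)]
            simp only [hEkdef]
            rw [hq1, hq2]
          calc ∑ r ∈ range M, (Wd k (b*M+r)) (T (D l (b*M+r)))
              = ∑ r ∈ range M, (Wd k (b*M)) (T (D l (b*M+r))) := by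
                apply Finset.sum_congr rfl; intro r hr; rw [hWc r (mem_range.1 hr)]
          _ = (Wd k (b*M)) (T (∑ r ∈ range M, D l (b*M+r))) := by
                rw [map_sum, map_sum]
          _ = 0 := by
                have hz : ∑ r ∈ range M, D l (b*M+r) = 0 := by
                  calc ∑ r ∈ range M, D l (b*M+r)
                      = ∑ r ∈ range M, d l ((((b*M+r):ℕ):ℝ)/2^n) := by
                        apply Finset.sum_congr rfl; intro r hr
                        show d l ((((b*M+r):ℕ):ℝ)/(N:ℝ)) = _
                        rw [hNc]
                  _ = 0 := diff_block_sum_zero n l hl.1 hl.2 (d l) (hd l hl.1 hl.2) b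
                            (mem_range.1 hb)
                rw [hz, map_zero, map_zero]
  have hbfor : ∀ k, 1 ≤ k → k ≤ n → LqNorm q (fun t => T' (D' k t))
      = ((∑ i ∈ range N, ‖T' (Wd k i)‖^q)/N)^(1/q) := by
    intro k h1 h2
    apply LqNorm_step N hN q (fun i => T' (Wd k i)) _
    intro t ht
    rw [hstep_D' k h2 t]
  have hsumform : (1:ℝ)/p + 1/q = 1 := by
    rw [one_div, one_div]; exact hpq.inv_add_inv_eq_one
  have hper : ∀ k, 1 ≤ k → k ≤ n →
      ∑ i ∈ range N, (T' (Wd k i)) (D k i)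
        ≤ (N:ℝ) * (LqNorm p (d k) * LqNorm q (fun t => T' (D' k t))) := by
    intro k h1 h2
    have hstep1 : ∑ i ∈ range N, (T' (Wd k i)) (D k i)
        ≤ ∑ i ∈ range N, ‖D k i‖ * ‖T' (Wd k i)‖ := by
      apply Finset.sum_le_sum
      intro i _
      calc (T' (Wd k i)) (D k i) ≤ ‖(T' (Wd k i)) (D k i)‖ := le_abs_self _
      _ ≤ ‖T' (Wd k i)‖ * ‖D k i‖ := ContinuousLinearMap.le_opNorm _ _
      _ = ‖D k i‖ * ‖T' (Wd k i)‖ := mul_comm _ _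
    have hhold := Real.inner_le_Lp_mul_Lq_of_nonneg (s := range N) (p := p) (q := q) hpq
        (f := fun i => ‖D k i‖) (g := fun i => ‖T' (Wd k i)‖)
        (fun i _ => norm_nonneg _) (fun i _ => norm_nonneg _)
    have hformA : (∑ i ∈ range N, ‖D k i‖^p)^(1/p) = (N:ℝ)^((1:ℝ)/p) * LqNorm p (d k) := by
      rw [ha k h1 h2, Real.div_rpow (Finset.sum_nonneg fun i _ =>
        Real.rpow_nonneg (norm_nonneg _) _) hNR.le, mul_comm,
        div_mul_cancel₀ _ (ne_of_gt (Real.rpow_pos_of_pos hNR _))]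
    have hformB : (∑ i ∈ range N, ‖T' (Wd k i)‖^q)^(1/q)
        = (N:ℝ)^((1:ℝ)/q) * LqNorm q (fun t => T' (D' k t)) := by
      rw [hbfor k h1 h2, Real.div_rpow (Finset.sum_nonneg fun i _ =>
        Real.rpow_nonneg (norm_nonneg _) _) hNR.le, mul_comm,
        div_mul_cancel₀ _ (ne_of_gt (Real.rpow_pos_of_pos hNR _))]
    calc ∑ i ∈ range N, (T' (Wd k i)) (D k i)
        ≤ ∑ i ∈ range N, ‖D k i‖ * ‖T' (Wd k i)‖ := hstep1
    _ ≤ (∑ i ∈ range N, ‖D k i‖^p)^(1/p) * (∑ i ∈ range N, ‖T' (Wd k i)‖^q)^(1/q) := hhold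
    _ = ((N:ℝ)^((1:ℝ)/p) * (N:ℝ)^((1:ℝ)/q)) *
          (LqNorm p (d k) * LqNorm q (fun t => T' (D' k t))) := by
        rw [hformA, hformB]; ring
    _ = (N:ℝ) * (LqNorm p (d k) * LqNorm q (fun t => T' (D' k t))) := by
        rw [← Real.rpow_add hNR, hsumform, Real.rpow_one]
  have hx'y : x' y ≤ ‖x'‖ * ‖y‖ := by
    calc x' y ≤ ‖x' y‖ := le_abs_self _
    _ ≤ ‖x'‖ * ‖y‖ := ContinuousLinearMap.le_opNorm _ _
  set F : ℕ → ℝ := fun k => if k = 0 then ‖y‖ else c * LqNorm p (d k) with hF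
  set G : ℕ → ℝ := fun k => if k = 0 then ‖x'‖
    else c⁻¹ * LqNorm q (fun t => T' (D' k t)) with hG
  have hFnn : ∀ j, 0 ≤ F j := by
    intro j
    rw [hF]
    by_cases h : j = 0
    · simp [h]
    · simp only [if_neg h]
      exact mul_nonneg hc.le (ha0 j)
  have hGnn : ∀ j, 0 ≤ G j := by
    intro j
    rw [hG]
    by_cases h : j = 0
    · simp [h]
    · simp only [if_neg h]
      exact mul_nonneg (inv_nonneg.2 hc.le) (LqNorm_nonneg _ _)
  have hFG : ‖x'‖ * ‖y‖ +
      ∑ k ∈ Finset.Icc 1 n, LqNorm p (d k) * LqNorm q (fun t => T' (D' k t))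
      = ∑ j ∈ range (n+1), F j * G j := by
    rw [range_succ_insert, Finset.sum_insert (by simp)]
    congr 1
    · rw [hF, hG]; simp [mul_comm]
    · apply Finset.sum_congr rfl
      intro k hk
      rw [Finset.mem_Icc] at hk
      rw [hF, hG]
      simp only [if_neg (by omega : ¬ k = 0)]
      field_simp
  have hFp : ∑ j ∈ range (n+1), F j ^ p = A := by
    rw [range_succ_insert, Finset.sum_insert (by simp), hAdef, Finset.mul_sum]
    have h0 : F 0 ^ p = ‖y‖ ^ p := by rw [hF]; simp
    have hrest : ∀ k ∈ Finset.Icc 1 n, F k ^ p = c^p * LqNorm p (d k) ^ p := by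
      intro k hk
      rw [Finset.mem_Icc] at hk
      rw [hF]
      simp only [if_neg (by omega : ¬ k = 0)]
      rw [Real.mul_rpow hc.le (ha0 k)]
    rw [h0, Finset.sum_congr rfl hrest]
  have hGq : ∑ j ∈ range (n+1), G j ^ q = ‖x'‖^q +
      c⁻¹^q * ∑ k ∈ Finset.Icc 1 n, (LqNorm q (fun t => T' (D' k t)))^q := by
    rw [range_succ_insert, Finset.sum_insert (by simp), Finset.mul_sum]
    have h0 : G 0 ^ q = ‖x'‖ ^ q := by rw [hG]; simp
    have hrest : ∀ k ∈ Finset.Icc 1 n, G k ^ q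
        = c⁻¹^q * (LqNorm q (fun t => T' (D' k t))) ^ q := by
      intro k hk
      rw [Finset.mem_Icc] at hk
      rw [hG]
      simp only [if_neg (by omega : ¬ k = 0)]
      rw [Real.mul_rpow (inv_nonneg.2 hc.le) (LqNorm_nonneg _ _)]
    rw [h0, Finset.sum_congr rfl hrest]
  have hhold2 := Real.inner_le_Lp_mul_Lq_of_nonneg (s := range (n+1)) (p := p) (q := q) hpq
      (f := F) (g := G) (fun j _ => hFnn j) (fun j _ => hGnn j)
  rw [hFp, hGq] at hhold2
  have hcotbound : (‖x'‖^q + c⁻¹^q *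
      ∑ k ∈ Finset.Icc 1 n, (LqNorm q (fun t => T' (D' k t)))^q)^(1/q) ≤ (S/N)^(1/q) :=
    le_trans Hcot hRHScot
  have hchain : S / N ≤ A^(1/p) * (S/N)^(1/q) := by
    have hch1 : S ≤ (N:ℝ) * (‖x'‖*‖y‖ +
        ∑ k ∈ Finset.Icc 1 n, LqNorm p (d k) * LqNorm q (fun t => T' (D' k t))) := by
      rw [hpair, mul_add]
      apply add_le_add
      · exact mul_le_mul_of_nonneg_left hx'y hNR.le
      · rw [Finset.mul_sum]
        apply Finset.sum_le_sum
        intro k hk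
        rw [Finset.mem_Icc] at hk
        exact hper k hk.1 hk.2
    have hch2 : ‖x'‖*‖y‖ +
        ∑ k ∈ Finset.Icc 1 n, LqNorm p (d k) * LqNorm q (fun t => T' (D' k t))
        ≤ A^(1/p) * (S/N)^(1/q) := by
      rw [hFG]
      calc ∑ j ∈ range (n+1), F j * G j
          ≤ A^(1/p) * (‖x'‖^q + c⁻¹^q *
              ∑ k ∈ Finset.Icc 1 n, (LqNorm q (fun t => T' (D' k t)))^q)^(1/q) := hhold2
      _ ≤ A^(1/p) * (S/N)^(1/q) :=
          mul_le_mul_of_nonneg_left hcotbound (Real.rpow_nonneg hA0 _)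
    rw [div_le_iff₀ hNR]
    calc S ≤ (N:ℝ) * (‖x'‖*‖y‖ + ∑ k ∈ Finset.Icc 1 n,
          LqNorm p (d k) * LqNorm q (fun t => T' (D' k t))) := hch1
    _ ≤ (N:ℝ) * (A^(1/p) * (S/N)^(1/q)) := mul_le_mul_of_nonneg_left hch2 hNR.le
    _ = A^(1/p) * (S/N)^(1/q) * N := by ring
  have hSN : 0 < S / N := div_pos hS hNR
  have hfact : (S/N)^((1:ℝ)/p) * (S/N)^((1:ℝ)/q) = S/N := by
    rw [← Real.rpow_add hSN, hsumform, Real.rpow_one]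
  have hkey : (S/N)^((1:ℝ)/p) * (S/N)^((1:ℝ)/q) ≤ A^(1/p) * (S/N)^(1/q) := by
    rw [hfact]; exact hchain
  exact le_of_mul_le_mul_right hkey (Real.rpow_pos_of_pos hSN (1/q))
end
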